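/- arXiv:1609.05828 — 6 statements merged into one kernel-verified Lean document; each statement's English description precedes it below -/
import Mathlib

section
/- Assume Ω is connected. If w : ℤ×ℤ → ℝ vanishes at every boundary vertex of S and satisfies w(v₁) + w(v₂) = 0 for every grid edge of S with endpoints v₁, v₂, then w vanishes at every mesh vertex of S. -/
/-- The closed unit square `[i,i+1] × [j,j+1] ⊆ ℝ²` indexed by `q = (i,j) ∈ ℤ × ℤ`. -/
def unitSq (q : ℤ × ℤ) : Set (ℝ × ℝ) :=
  Set.Icc (q.1 : ℝ) (q.1 + 1) ×ˢ Set.Icc (q.2 : ℝ) (q.2 + 1)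

/-- `Ω̄`, the union of the closed squares of the mesh `S`. -/
def meshRegion (S : Finset (ℤ × ℤ)) : Set (ℝ × ℝ) := ⋃ q ∈ S, unitSq q

/-- `v` is an interior vertex of `S`: all four grid squares having `v` as a corner belong
to `S`. -/
abbrev interiorVertex (S : Finset (ℤ × ℤ)) (v : ℤ × ℤ) : Prop :=
  (v.1 - 1, v.2 - 1) ∈ S ∧ (v.1 - 1, v.2) ∈ S ∧ (v.1, v.2 - 1) ∈ S ∧ v ∈ S

/-- `v` is a mesh vertex of `S`: it is a corner of some square of `S`. -/
abbrev meshVertex (S : Finset (ℤ × ℤ)) (v : ℤ × ℤ) : Prop :=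
  (v.1 - 1, v.2 - 1) ∈ S ∨ (v.1 - 1, v.2) ∈ S ∨ (v.1, v.2 - 1) ∈ S ∨ v ∈ S

/-- `v` is a boundary vertex of `S`: a mesh vertex which is not interior. -/
abbrev boundaryVertex (S : Finset (ℤ × ℤ)) (v : ℤ × ℤ) : Prop :=
  meshVertex S v ∧ ¬ interiorVertex S v

/-- The four corners of the square indexed by `q`. -/
def cornersF (q : ℤ × ℤ) : Finset (ℤ × ℤ) :=
  {q, (q.1 + 1, q.2), (q.1, q.2 + 1), (q.1 + 1, q.2 + 1)}

/-- `q` is an interior square: all four of its corners are interior vertices. -/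
abbrev interiorSquare (S : Finset (ℤ × ℤ)) (q : ℤ × ℤ) : Prop :=
  interiorVertex S q ∧ interiorVertex S (q.1 + 1, q.2) ∧
    interiorVertex S (q.1, q.2 + 1) ∧ interiorVertex S (q.1 + 1, q.2 + 1)

/-- The square `(i,j)` is red if `i + j` is even (and black otherwise). -/
abbrev isRed (q : ℤ × ℤ) : Prop := (q.1 + q.2) % 2 = 0

/-- The standing assumptions on the mesh `S`: it is nonempty, `Ω` is connected and simply
connected, no square has four boundary corners, every grid edge shared by two squares of `S`
has an interior endpoint, and no square has exactly two boundary corners lying at diagonally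
opposite corners. -/
structure Standing (S : Finset (ℤ × ℤ)) : Prop where
  nonempty : S.Nonempty
  connected : IsConnected (interior (meshRegion S))
  simplyConnected : SimplyConnectedSpace ↥(interior (meshRegion S))
  noFourBoundary : ∀ q ∈ S,
    ¬ (boundaryVertex S q ∧ boundaryVertex S (q.1 + 1, q.2) ∧
        boundaryVertex S (q.1, q.2 + 1) ∧ boundaryVertex S (q.1 + 1, q.2 + 1))
  edgeH : ∀ v : ℤ × ℤ, v ∈ S → (v.1, v.2 - 1) ∈ S →
    interiorVertex S v ∨ interiorVertex S (v.1 + 1, v.2)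
  edgeV : ∀ v : ℤ × ℤ, v ∈ S → (v.1 - 1, v.2) ∈ S →
    interiorVertex S v ∨ interiorVertex S (v.1, v.2 + 1)
  noDiagOne : ∀ q ∈ S,
    ¬ (boundaryVertex S q ∧ boundaryVertex S (q.1 + 1, q.2 + 1) ∧
        interiorVertex S (q.1 + 1, q.2) ∧ interiorVertex S (q.1, q.2 + 1))
  noDiagTwo : ∀ q ∈ S,
    ¬ (boundaryVertex S (q.1 + 1, q.2) ∧ boundaryVertex S (q.1, q.2 + 1) ∧
        interiorVertex S q ∧ interiorVertex S (q.1 + 1, q.2 + 1))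

/-- The discrete `x`-derivative `∂ˣc(Q)` of a scalar vertex function on the square `Q`. -/
def dX (c : ℤ × ℤ → ℝ) (q : ℤ × ℤ) : ℝ :=
  c (q.1 + 1, q.2) + c (q.1 + 1, q.2 + 1) - c (q.1, q.2) - c (q.1, q.2 + 1)

/-- The discrete `y`-derivative `∂ʸc(Q)` of a scalar vertex function on the square `Q`. -/
def dY (c : ℤ × ℤ → ℝ) (q : ℤ × ℤ) : ℝ :=
  c (q.1, q.2 + 1) + c (q.1 + 1, q.2 + 1) - c (q.1, q.2) - c (q.1 + 1, q.2)

/-- The discrete divergence `(Dc)(Q) = ∂ˣc¹(Q) + ∂ʸc²(Q)`. -/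
def Ddiv (c : ℤ × ℤ → ℝ × ℝ) (q : ℤ × ℤ) : ℝ :=
  dX (fun v => (c v).1) q + dY (fun v => (c v).2) q

/-- The discrete curl `(Cc)(Q) = ∂ˣc²(Q) − ∂ʸc¹(Q)`. -/
def Ccurl (c : ℤ × ℤ → ℝ × ℝ) (q : ℤ × ℤ) : ℝ :=
  dX (fun v => (c v).2) q - dY (fun v => (c v).1) q

/-- Assume `Ω` is connected.  If `w : ℤ × ℤ → ℝ` vanishes at every boundary
vertex of `S` and satisfies `w(v₁) + w(v₂) = 0` for every grid edge of `S` with endpoints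
`v₁, v₂` (i.e. every unordered pair of integer points at distance `1` which are both corners
of a common square of `S`), then `w` vanishes at every mesh vertex of `S`. -/
theorem sweeping_out (S : Finset (ℤ × ℤ)) (hS : S.Nonempty)
    (hconn : IsConnected (interior (meshRegion S)))
    (w : ℤ × ℤ → ℝ)
    (hbd : ∀ v : ℤ × ℤ, boundaryVertex S v → w v = 0)
    (hedge : ∀ v₁ v₂ : ℤ × ℤ, (∃ q ∈ S, v₁ ∈ cornersF q ∧ v₂ ∈ cornersF q) →
      (v₁.1 - v₂.1) ^ 2 + (v₁.2 - v₂.2) ^ 2 = 1 → w v₁ + w v₂ = 0) :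
    ∀ v : ℤ × ℤ, meshVertex S v → w v = 0 := by
  classical
  set M : ℤ := S.sup' hS (fun p => p.2) with hM
  have hle : ∀ q ∈ S, q.2 ≤ M := fun q hq => Finset.le_sup' (fun p => p.2) hq
  have hmem : ∀ q : ℤ × ℤ, (q.1, q.2) ∈ cornersF q ∧ (q.1 + 1, q.2) ∈ cornersF q ∧
      (q.1, q.2 + 1) ∈ cornersF q ∧ (q.1 + 1, q.2 + 1) ∈ cornersF q := by
    intro q
    simp [cornersF, Finset.mem_insert]
  have hvertL : ∀ q ∈ S, w (q.1, q.2) + w (q.1, q.2 + 1) = 0 := by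
    intro q hq
    refine hedge _ _ ⟨q, hq, (hmem q).1, (hmem q).2.2.1⟩ (by ring)
  have hvertR : ∀ q ∈ S, w (q.1 + 1, q.2) + w (q.1 + 1, q.2 + 1) = 0 := by
    intro q hq
    refine hedge _ _ ⟨q, hq, (hmem q).2.1, (hmem q).2.2.2⟩ (by ring)
  have key : ∀ n : ℕ, ∀ q ∈ S, (M - q.2).toNat = n →
      w (q.1, q.2) = 0 ∧ w (q.1 + 1, q.2) = 0 ∧
      w (q.1, q.2 + 1) = 0 ∧ w (q.1 + 1, q.2 + 1) = 0 := by
    intro n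
    induction n using Nat.strong_induction_on with
    | _ n ih =>
      intro q hq hn
      by_cases hup : (q.1, q.2 + 1) ∈ S
      · have h2 : q.2 + 1 ≤ M := hle _ hup
        have hlt : (M - (q.2 + 1)).toNat < n := by omega
        obtain ⟨h1, h2', _, _⟩ := ih _ hlt (q.1, q.2 + 1) hup rfl
        have e1 := hvertL q hq
        have e2 := hvertR q hq
        simp only at h1 h2' e1 e2 ⊢
        refine ⟨by linarith, by linarith, h1, h2'⟩
      · have htopL : w (q.1, q.2 + 1) = 0 := by
          apply hbd
          constructor
          · right; right; left; simpa using hq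
          · intro hint
            exact hup hint.2.2.2
        have htopR : w (q.1 + 1, q.2 + 1) = 0 := by
          apply hbd
          constructor
          · left; simpa using hq
          · intro hint
            exact hup (by simpa using hint.2.1)
        have e1 := hvertL q hq
        have e2 := hvertR q hq
        exact ⟨by linarith, by linarith, htopL, htopR⟩
  have keyS : ∀ q ∈ S, w (q.1, q.2) = 0 ∧ w (q.1 + 1, q.2) = 0 ∧
      w (q.1, q.2 + 1) = 0 ∧ w (q.1 + 1, q.2 + 1) = 0 :=
    fun q hq => key _ q hq rfl
  intro v hv
  rcases hv with h | h | h | h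
  · have := (keyS _ h).2.2.2
    simpa using this
  · have := (keyS _ h).2.1
    simpa using this
  · have := (keyS _ h).2.2.1
    simpa using this
  · have := (keyS _ h).1
    simpa using this
end

section
/- Assume Ω is connected and simply connected. For every c : ℤ×ℤ → ℝ×ℝ supported on the interior vertices, Σ_{Q∈S} [(∂ˣc¹(Q))² + (∂ʸc¹(Q))² + (∂ˣc²(Q))² + (∂ʸc²(Q))²] = Σ_{Q∈S} [((Dc)(Q))² + ((Cc)(Q))²]. (This is the decomposition of the broken H¹ seminorm of a P1-nonconforming vector field with zero boundary midpoint values into its discrete divergence and discrete curl parts.) -/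
private lemma sum_shift_eq {S : Finset (ℤ × ℤ)} (V : ℤ × ℤ → ℝ) (e : ℤ × ℤ)
    (h1 : ∀ q ∈ S, q - e ∉ S → V q = 0)
    (h2 : ∀ q, q ∉ S → q - e ∈ S → V q = 0) :
    ∑ q ∈ S, V (q + e) = ∑ q ∈ S, V q := by
  classical
  set T : Finset (ℤ × ℤ) := S.image (· + e) with hT
  have himg : ∑ q ∈ S, V (q + e) = ∑ q ∈ T, V q := by
    rw [hT, Finset.sum_image]
    intro a _ b _ h
    simpa using h
  rw [himg]
  have hTsub : ∑ q ∈ T, V q = ∑ q ∈ S ∪ T, V q := by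
    apply Finset.sum_subset Finset.subset_union_right
    intro q hq hqT
    have hqS : q ∈ S := by
      rcases Finset.mem_union.mp hq with h | h
      · exact h
      · exact absurd h hqT
    apply h1 q hqS
    intro hsub
    exact hqT (Finset.mem_image.mpr ⟨q - e, hsub, by ring⟩)
  have hSsub : ∑ q ∈ S, V q = ∑ q ∈ S ∪ T, V q := by
    apply Finset.sum_subset Finset.subset_union_left
    intro q hq hqS
    have hqT : q ∈ T := by
      rcases Finset.mem_union.mp hq with h | h
      · exact absurd h hqS
      · exact h
    rcases Finset.mem_image.mp hqT with ⟨p, hp, hpe⟩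
    apply h2 q hqS
    have : q - e = p := by rw [← hpe]; ring
    rw [this]; exact hp
  rw [hTsub, hSsub]

/-- Assume `Ω` is connected and simply connected.  For every
`c : ℤ × ℤ → ℝ × ℝ` supported on the interior vertices,
`Σ_{Q∈S} [(∂ˣc¹(Q))² + (∂ʸc¹(Q))² + (∂ˣc²(Q))² + (∂ʸc²(Q))²]
  = Σ_{Q∈S} [((Dc)(Q))² + ((Cc)(Q))²]`:
the broken `H¹` seminorm of a `P1`-nonconforming vector field with zero boundary midpoint
values decomposes into its discrete divergence and discrete curl parts. -/
theorem broken_H1_decomposition (S : Finset (ℤ × ℤ)) (hS : S.Nonempty)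
    (hconn : IsConnected (interior (meshRegion S)))
    (hsc : SimplyConnectedSpace ↥(interior (meshRegion S)))
    (c : ℤ × ℤ → ℝ × ℝ) (hc : ∀ v : ℤ × ℤ, ¬ interiorVertex S v → c v = 0) :
    ∑ q ∈ S,
        ((dX (fun v => (c v).1) q) ^ 2 + (dY (fun v => (c v).1) q) ^ 2 +
          (dX (fun v => (c v).2) q) ^ 2 + (dY (fun v => (c v).2) q) ^ 2) =
      ∑ q ∈ S, ((Ddiv c q) ^ 2 + (Ccurl c q) ^ 2) := by
  classical
  set f : ℤ × ℤ → ℝ := fun v => (c v).1 with hf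
  set g : ℤ × ℤ → ℝ := fun v => (c v).2 with hg
  have hz : ∀ v, ¬ interiorVertex S v → f v = 0 ∧ g v = 0 := by
    intro v hv
    constructor <;> simp [hf, hg, hc v hv]
  set V : ℤ × ℤ → ℝ := fun q => f q * g (q.1, q.2 + 1) - g q * f (q.1, q.2 + 1) with hV
  set H : ℤ × ℤ → ℝ := fun q => f q * g (q.1 + 1, q.2) - g q * f (q.1 + 1, q.2) with hH
  have hVzero : ∀ q : ℤ × ℤ, ¬ interiorVertex S q → V q = 0 := by
    intro q hq
    simp [hV, (hz q hq).1, (hz q hq).2]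
  have hHzero : ∀ q : ℤ × ℤ, ¬ interiorVertex S q → H q = 0 := by
    intro q hq
    simp [hH, (hz q hq).1, (hz q hq).2]
  have hVsum : ∑ q ∈ S, V (q + ((1 : ℤ), (0 : ℤ))) = ∑ q ∈ S, V q := by
    apply sum_shift_eq
    · intro q hq hq'
      apply hVzero
      intro h
      apply hq'
      have he : q - ((1 : ℤ), (0 : ℤ)) = (q.1 - 1, q.2) := by
        simp [Prod.ext_iff]
      rw [he]
      exact h.2.1
    · intro q hq hq'
      apply hVzero
      intro h
      exact hq h.2.2.2
  have hHsum : ∑ q ∈ S, H (q + ((0 : ℤ), (1 : ℤ))) = ∑ q ∈ S, H q := by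
    apply sum_shift_eq
    · intro q hq hq'
      apply hHzero
      intro h
      apply hq'
      have he : q - ((0 : ℤ), (1 : ℤ)) = (q.1, q.2 - 1) := by
        simp [Prod.ext_iff]
      rw [he]
      exact h.2.2.1
    · intro q hq hq'
      apply hHzero
      intro h
      exact hq h.2.2.2
  have hVsum' : ∑ q ∈ S, V (q.1 + 1, q.2) = ∑ q ∈ S, V q := by
    rw [← hVsum]
    apply Finset.sum_congr rfl
    intro q _
    congr 1
    simp [Prod.ext_iff]
  have hHsum' : ∑ q ∈ S, H (q.1, q.2 + 1) = ∑ q ∈ S, H q := by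
    rw [← hHsum]
    apply Finset.sum_congr rfl
    intro q _
    congr 1
    simp [Prod.ext_iff]
  have h4 : ∑ q ∈ S, (V q - V (q.1 + 1, q.2) + H (q.1, q.2 + 1) - H q) = 0 := by
    rw [Finset.sum_sub_distrib, Finset.sum_add_distrib, Finset.sum_sub_distrib]
    rw [hVsum', hHsum']
    ring
  have key : ∀ q : ℤ × ℤ,
      (Ddiv c q) ^ 2 + (Ccurl c q) ^ 2
        = (dX f q ^ 2 + dY f q ^ 2 + dX g q ^ 2 + dY g q ^ 2)
          - 4 * (V q - V (q.1 + 1, q.2) + H (q.1, q.2 + 1) - H q) := by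
    intro q
    simp only [hV, hH, Ddiv, Ccurl, dX, dY, ← hf, ← hg]
    ring
  have hsum : ∑ q ∈ S, ((Ddiv c q) ^ 2 + (Ccurl c q) ^ 2)
      = ∑ q ∈ S, (dX f q ^ 2 + dY f q ^ 2 + dX g q ^ 2 + dY g q ^ 2)
        - 4 * ∑ q ∈ S, (V q - V (q.1 + 1, q.2) + H (q.1, q.2 + 1) - H q) := by
    rw [Finset.mul_sum, ← Finset.sum_sub_distrib]
    exact Finset.sum_congr rfl fun q _ => key q
  rw [hsum, h4]
  ring
end

section
/- Let Q = [−1/2,1/2]² and for k = 1,2 let w_k(x,y) = α_k + β_k x + γ_k y + δ_k xy and v_k(x,y) = α_k + β_k x + γ_k y with real coefficients α_k, β_k, γ_k, δ_k. Setting w = (w₁,w₂) and v = (v₁,v₂), we have ∫_Q [|∇w|² − (div w)² − (curl w)²] dxdy = ∫_Q [|∇v|² − (div v)² − (curl v)²] dxdy. -/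
open MeasureTheory

/-- The centered unit square `Q = [−1/2, 1/2]²`. -/
def centeredSq : Set (ℝ × ℝ) :=
  Set.Icc (-(1 : ℝ) / 2) (1 / 2) ×ˢ Set.Icc (-(1 : ℝ) / 2) (1 / 2)

/-- The integrand `|∇u|² − (div u)² − (curl u)²` for a vector field `u = (u₁,u₂)` on `ℝ²`,
where `|∇u|² = (∂₁u₁)² + (∂₂u₁)² + (∂₁u₂)² + (∂₂u₂)²`, `div u = ∂₁u₁ + ∂₂u₂` and
`curl u = ∂₁u₂ − ∂₂u₁`. -/
noncomputable def gradMinusDivCurl (u₁ u₂ : ℝ × ℝ → ℝ) (x : ℝ × ℝ) : ℝ :=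
  (fderiv ℝ u₁ x (1, 0)) ^ 2 + (fderiv ℝ u₁ x (0, 1)) ^ 2 +
    (fderiv ℝ u₂ x (1, 0)) ^ 2 + (fderiv ℝ u₂ x (0, 1)) ^ 2 -
    (fderiv ℝ u₁ x (1, 0) + fderiv ℝ u₂ x (0, 1)) ^ 2 -
    (fderiv ℝ u₂ x (1, 0) - fderiv ℝ u₁ x (0, 1)) ^ 2

/- Writing `a, b, c, d` for `∂₁u₁, ∂₂u₁, ∂₁u₂, ∂₂u₂`, the integrand is `2 (b c − a d)`, minus twice the
Jacobian determinant. For the bilinear fields the `xy` contributions of the two products in the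
determinant cancel, so the integrand of `w` is that of `v` plus a linear function of `(x, y)`,
which has mean zero over the centered square. -/

theorem gradMinusDivCurl_eq (u₁ u₂ : ℝ × ℝ → ℝ) (x : ℝ × ℝ) :
    gradMinusDivCurl u₁ u₂ x =
      2 * (fderiv ℝ u₁ x (0, 1) * fderiv ℝ u₂ x (1, 0) -
        fderiv ℝ u₁ x (1, 0) * fderiv ℝ u₂ x (0, 1)) := by
  unfold gradMinusDivCurl
  ring

theorem hasFDerivAt_affine (α β γ : ℝ) (x : ℝ × ℝ) :
    HasFDerivAt (fun p : ℝ × ℝ => α + β * p.1 + γ * p.2)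
      (β • ContinuousLinearMap.fst ℝ ℝ ℝ + γ • ContinuousLinearMap.snd ℝ ℝ ℝ) x := by
  have h : HasFDerivAt (fun p : ℝ × ℝ => α + β * p.1 + γ * p.2) _ x :=
    ((hasFDerivAt_const α x).add ((hasFDerivAt_fst (𝕜 := ℝ) (p := x)).const_mul β)).add
      ((hasFDerivAt_snd (𝕜 := ℝ) (p := x)).const_mul γ)
  exact h.congr_fderiv (by rw [zero_add])

theorem fderiv_affine_apply (α β γ : ℝ) (x v : ℝ × ℝ) :
    fderiv ℝ (fun p : ℝ × ℝ => α + β * p.1 + γ * p.2) x v = β * v.1 + γ * v.2 := by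
  simp [(hasFDerivAt_affine α β γ x).fderiv]

theorem fderiv_bilinear_apply (α β γ δ : ℝ) (x v : ℝ × ℝ) :
    fderiv ℝ (fun p : ℝ × ℝ => α + β * p.1 + γ * p.2 + δ * (p.1 * p.2)) x v =
      β * v.1 + γ * v.2 + δ * (x.1 * v.2 + x.2 * v.1) := by
  have h : HasFDerivAt (fun p : ℝ × ℝ => α + β * p.1 + γ * p.2 + δ * (p.1 * p.2)) _ x :=
    (hasFDerivAt_affine α β γ x).add
      (((hasFDerivAt_fst (p := x)).mul (hasFDerivAt_snd (p := x))).const_mul δ)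
  simp [h.fderiv, mul_add]

theorem integral_Icc_neg_half_half_id : ∫ t in Set.Icc (-(1 : ℝ) / 2) (1 / 2), t = 0 := by
  rw [integral_Icc_eq_integral_Ioc, ← intervalIntegral.integral_of_le (by norm_num), integral_id]
  norm_num

theorem volume_real_centeredSq : volume.real centeredSq = 1 := by
  rw [centeredSq, Measure.volume_eq_prod, measureReal_def, Measure.prod_prod, Real.volume_Icc]
  norm_num

theorem integral_centeredSq_fst : ∫ x in centeredSq, x.1 = 0 := by
  have h := setIntegral_prod_mul (μ := volume) (ν := volume) (fun t : ℝ => t) (fun _ : ℝ => (1 : ℝ))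
    (Set.Icc (-(1 : ℝ) / 2) (1 / 2)) (Set.Icc (-(1 : ℝ) / 2) (1 / 2))
  simp only [mul_one] at h
  rw [centeredSq, Measure.volume_eq_prod, h, integral_Icc_neg_half_half_id, zero_mul]

theorem integral_centeredSq_snd : ∫ x in centeredSq, x.2 = 0 := by
  have h := setIntegral_prod_mul (μ := volume) (ν := volume) (fun _ : ℝ => (1 : ℝ)) (fun t : ℝ => t)
    (Set.Icc (-(1 : ℝ) / 2) (1 / 2)) (Set.Icc (-(1 : ℝ) / 2) (1 / 2))
  simp only [one_mul] at h
  rw [centeredSq, Measure.volume_eq_prod, h, integral_Icc_neg_half_half_id, mul_zero]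

theorem integral_centeredSq_affine (a b c : ℝ) :
    ∫ x in centeredSq, (a + b * x.1 + c * x.2) = a := by
  have hQ : IsCompact centeredSq := isCompact_Icc.prod isCompact_Icc
  have hint : ∀ f : ℝ × ℝ → ℝ, Continuous f → IntegrableOn f centeredSq :=
    fun f hf => hf.continuousOn.integrableOn_compact hQ
  rw [integral_add (hint _ (by fun_prop)) (hint _ (by fun_prop)),
    integral_add (hint _ (by fun_prop)) (hint _ (by fun_prop)), integral_const_mul,
    integral_const_mul, integral_centeredSq_fst, integral_centeredSq_snd, setIntegral_const,
    volume_real_centeredSq]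
  simp

/-- Let `Q = [−1/2,1/2]²` and for `k = 1,2` let
`w_k(x,y) = α_k + β_k x + γ_k y + δ_k xy` and `v_k(x,y) = α_k + β_k x + γ_k y`.  With
`w = (w₁,w₂)` and `v = (v₁,v₂)`,
`∫_Q [|∇w|² − (div w)² − (curl w)²] = ∫_Q [|∇v|² − (div v)² − (curl v)²]`. -/
theorem bilinear_part_energy_eq (α₁ β₁ γ₁ δ₁ α₂ β₂ γ₂ δ₂ : ℝ) :
    ∫ x in centeredSq,
        gradMinusDivCurl
          (fun p => α₁ + β₁ * p.1 + γ₁ * p.2 + δ₁ * (p.1 * p.2))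
          (fun p => α₂ + β₂ * p.1 + γ₂ * p.2 + δ₂ * (p.1 * p.2)) x =
      ∫ x in centeredSq,
        gradMinusDivCurl
          (fun p => α₁ + β₁ * p.1 + γ₁ * p.2)
          (fun p => α₂ + β₂ * p.1 + γ₂ * p.2) x := by
  have hv : ∀ x, gradMinusDivCurl (fun p => α₁ + β₁ * p.1 + γ₁ * p.2)
      (fun p => α₂ + β₂ * p.1 + γ₂ * p.2) x = 2 * (γ₁ * β₂ - β₁ * γ₂) := by
    intro x
    simp only [gradMinusDivCurl_eq, fderiv_affine_apply]
    ring
  have hw : ∀ x : ℝ × ℝ, gradMinusDivCurl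
      (fun p => α₁ + β₁ * p.1 + γ₁ * p.2 + δ₁ * (p.1 * p.2))
      (fun p => α₂ + β₂ * p.1 + γ₂ * p.2 + δ₂ * (p.1 * p.2)) x =
        2 * (γ₁ * β₂ - β₁ * γ₂) + 2 * (δ₁ * β₂ - β₁ * δ₂) * x.1 + 2 * (γ₁ * δ₂ - δ₁ * γ₂) * x.2 := by
    intro x
    simp only [gradMinusDivCurl_eq, fderiv_bilinear_apply]
    ring
  simp only [hw, hv, integral_centeredSq_affine, setIntegral_const, volume_real_centeredSq, one_smul]
end

section
/- Under the standing assumptions, the set R° = (union of the closed red squares of S) \ ∂Ω̄ is path-connected, and likewise the set K° = (union of the closed black squares of S) \ ∂Ω̄ is path-connected, where ∂Ω̄ denotes the topological frontier of Ω̄ in ℝ². -/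
namespace RBAux

open Set

def U (S : Finset (ℤ × ℤ)) : Set (ℝ × ℝ) := interior (meshRegion S)

def openSq (q : ℤ × ℤ) : Set (ℝ × ℝ) :=
  Ioo (q.1 : ℝ) (q.1 + 1) ×ˢ Ioo (q.2 : ℝ) (q.2 + 1)

def Aq (S : Finset (ℤ × ℤ)) (q : ℤ × ℤ) : Set (ℝ × ℝ) := unitSq q ∩ U S

def Dq (S : Finset (ℤ × ℤ)) (q : ℤ × ℤ) : Set (ℝ × ℝ) := (unitSq q \ openSq q) ∩ U S

noncomputable def ctr (q : ℤ × ℤ) : ℝ × ℝ := ((q.1 : ℝ) + 2⁻¹, (q.2 : ℝ) + 2⁻¹)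

lemma mem_unitSq {p : ℝ × ℝ} {q : ℤ × ℤ} :
    p ∈ unitSq q ↔ ((q.1 : ℝ) ≤ p.1 ∧ p.1 ≤ q.1 + 1) ∧ ((q.2 : ℝ) ≤ p.2 ∧ p.2 ≤ q.2 + 1) := by
  rw [unitSq, Set.mem_prod, Set.mem_Icc, Set.mem_Icc]

lemma mem_openSq {p : ℝ × ℝ} {q : ℤ × ℤ} :
    p ∈ openSq q ↔ ((q.1 : ℝ) < p.1 ∧ p.1 < q.1 + 1) ∧ ((q.2 : ℝ) < p.2 ∧ p.2 < q.2 + 1) := by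
  simp [openSq, Set.mem_prod, Set.mem_Ioo]

lemma isClosed_unitSq (q : ℤ × ℤ) : IsClosed (unitSq q) :=
  (isClosed_Icc).prod isClosed_Icc

lemma isClosed_meshRegion (S : Finset (ℤ × ℤ)) : IsClosed (meshRegion S) := by
  rw [meshRegion, ← Finset.set_biUnion_coe]
  exact S.finite_toSet.isClosed_biUnion (fun q _ => isClosed_unitSq q)

lemma unitSq_subset_mesh {S : Finset (ℤ × ℤ)} {q : ℤ × ℤ} (hq : q ∈ S) :
    unitSq q ⊆ meshRegion S := fun p hp => Set.mem_iUnion₂.mpr ⟨q, hq, hp⟩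

lemma exists_sq {S : Finset (ℤ × ℤ)} {p : ℝ × ℝ} (hp : p ∈ meshRegion S) :
    ∃ q ∈ S, p ∈ unitSq q := by simpa [meshRegion] using hp

lemma pinX {a m : ℤ} {x : ℝ} (h1 : (a : ℝ) < x) (h2 : x < a + 1)
    (h3 : (m : ℝ) ≤ x) (h4 : x ≤ m + 1) : m = a := by
  have hma : m < a + 1 := by exact_mod_cast lt_of_le_of_lt h3 h2
  have ham : a < m + 1 := by exact_mod_cast lt_of_lt_of_le h1 h4
  omega

lemma openSq_unique {p : ℝ × ℝ} {q m : ℤ × ℤ} (hp : p ∈ openSq q) (hm : p ∈ unitSq m) :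
    m = q := by
  rw [mem_openSq] at hp; rw [mem_unitSq] at hm
  exact Prod.ext (pinX hp.1.1 hp.1.2 hm.1.1 hm.1.2) (pinX hp.2.1 hp.2.2 hm.2.1 hm.2.2)

lemma openSq_subset_unitSq {q : ℤ × ℤ} : openSq q ⊆ unitSq q := by
  intro p hp; rw [mem_openSq] at hp
  exact mem_unitSq.mpr ⟨⟨hp.1.1.le, hp.1.2.le⟩, hp.2.1.le, hp.2.2.le⟩

lemma box_subset_U {S : Finset (ℤ × ℤ)} {W : Set (ℝ × ℝ)} (hW : IsOpen W)
    (hsub : W ⊆ meshRegion S) : W ⊆ U S := interior_maximal hsub hW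

lemma openSq_subset_U {S : Finset (ℤ × ℤ)} {q : ℤ × ℤ} (hq : q ∈ S) : openSq q ⊆ U S :=
  box_subset_U (isOpen_Ioo.prod isOpen_Ioo) (openSq_subset_unitSq.trans (unitSq_subset_mesh hq))

lemma ctr_mem_openSq (q : ℤ × ℤ) : ctr q ∈ openSq q := by
  rw [mem_openSq]; norm_num [ctr]

lemma ctr_mem_Aq {S : Finset (ℤ × ℤ)} {q : ℤ × ℤ} (hq : q ∈ S) : ctr q ∈ Aq S q :=
  ⟨openSq_subset_unitSq (ctr_mem_openSq q), openSq_subset_U hq (ctr_mem_openSq q)⟩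

lemma vertex_mem_U {S : Finset (ℤ × ℤ)} {v : ℤ × ℤ} (hv : interiorVertex S v) :
    ((v.1 : ℝ), (v.2 : ℝ)) ∈ U S := by
  have hW : IsOpen (Ioo ((v.1 : ℝ) - 1) ((v.1 : ℝ) + 1) ×ˢ Ioo ((v.2 : ℝ) - 1) ((v.2 : ℝ) + 1)) :=
    isOpen_Ioo.prod isOpen_Ioo
  apply box_subset_U hW ?_ ?_
  · rintro ⟨px, py⟩ ⟨hx, hy⟩
    simp only [Set.mem_Ioo] at hx hy
    rcases le_total px (v.1 : ℝ) with hx' | hx' <;> rcases le_total py (v.2 : ℝ) with hy' | hy'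
    · exact unitSq_subset_mesh hv.1 (mem_unitSq.mpr (by push_cast; exact ⟨⟨by linarith, by linarith⟩, by linarith, by linarith⟩))
    · exact unitSq_subset_mesh hv.2.1 (mem_unitSq.mpr (by push_cast; exact ⟨⟨by linarith, by linarith⟩, by linarith, by linarith⟩))
    · exact unitSq_subset_mesh hv.2.2.1 (mem_unitSq.mpr (by push_cast; exact ⟨⟨by linarith, by linarith⟩, by linarith, by linarith⟩))
    · exact unitSq_subset_mesh hv.2.2.2 (mem_unitSq.mpr (by push_cast; exact ⟨⟨by linarith, by linarith⟩, by linarith, by linarith⟩))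
  · exact ⟨⟨by linarith, by linarith⟩, by linarith, by linarith⟩

lemma bottomEdge_subset_U {S : Finset (ℤ × ℤ)} {i j : ℤ} (h1 : (i, j) ∈ S) (h2 : (i, j - 1) ∈ S) :
    Ioo (i : ℝ) ((i : ℝ) + 1) ×ˢ {(j : ℝ)} ⊆ U S := by
  have hbox : Ioo (i : ℝ) ((i : ℝ) + 1) ×ˢ Ioo ((j : ℝ) - 1) ((j : ℝ) + 1) ⊆ U S := by
    apply box_subset_U (isOpen_Ioo.prod isOpen_Ioo)
    rintro ⟨px, py⟩ ⟨hx, hy⟩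
    simp only [Set.mem_Ioo] at hx hy
    rcases le_total py (j : ℝ) with hy' | hy'
    · exact unitSq_subset_mesh h2 (mem_unitSq.mpr (by push_cast; exact ⟨⟨hx.1.le, hx.2.le⟩, by linarith, by linarith⟩))
    · exact unitSq_subset_mesh h1 (mem_unitSq.mpr ⟨⟨hx.1.le, hx.2.le⟩, by linarith, by linarith⟩)
  rintro ⟨px, py⟩ ⟨hx, hy⟩
  simp only [Set.mem_singleton_iff] at hy
  exact hbox ⟨hx, by simp only [Set.mem_Ioo]; constructor <;> linarith [hy.le, hy.ge]⟩

lemma leftEdge_subset_U {S : Finset (ℤ × ℤ)} {i j : ℤ} (h1 : (i, j) ∈ S) (h2 : (i - 1, j) ∈ S) :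
    {(i : ℝ)} ×ˢ Ioo (j : ℝ) ((j : ℝ) + 1) ⊆ U S := by
  have hbox : Ioo ((i : ℝ) - 1) ((i : ℝ) + 1) ×ˢ Ioo (j : ℝ) ((j : ℝ) + 1) ⊆ U S := by
    apply box_subset_U (isOpen_Ioo.prod isOpen_Ioo)
    rintro ⟨px, py⟩ ⟨hx, hy⟩
    simp only [Set.mem_Ioo] at hx hy
    rcases le_total px (i : ℝ) with hx' | hx'
    · exact unitSq_subset_mesh h2 (mem_unitSq.mpr (by push_cast; exact ⟨⟨by linarith, by linarith⟩, hy.1.le, hy.2.le⟩))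
    · exact unitSq_subset_mesh h1 (mem_unitSq.mpr ⟨⟨by linarith, by linarith⟩, hy.1.le, hy.2.le⟩)
  rintro ⟨px, py⟩ ⟨hx, hy⟩
  simp only [Set.mem_singleton_iff] at hx
  exact hbox ⟨by simp only [Set.mem_Ioo]; constructor <;> linarith [hx.le, hx.ge], hy⟩

lemma U_nearby {S : Finset (ℤ × ℤ)} {p : ℝ × ℝ} (hp : p ∈ U S) :
    ∃ δ : ℝ, 0 < δ ∧ δ < 1 ∧
      ∀ a b : ℝ, |a| ≤ δ → |b| ≤ δ → (p.1 + a, p.2 + b) ∈ meshRegion S := by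
  have h1 : meshRegion S ∈ nhds p := mem_interior_iff_mem_nhds.mp hp
  rcases Metric.mem_nhds_iff.mp h1 with ⟨ε, hε, hball⟩
  refine ⟨min (ε / 2) (1 / 2), by positivity,
    lt_of_le_of_lt (min_le_right _ _) (by norm_num), ?_⟩
  intro a b ha hb
  apply hball
  rw [Metric.mem_ball, Prod.dist_eq]
  have hpa : dist (p.1 + a) p.1 = |a| := by rw [Real.dist_eq]; ring_nf
  have hpb : dist (p.2 + b) p.2 = |b| := by rw [Real.dist_eq]; ring_nf
  have hlt : min (ε / 2) (1 / 2) < ε := lt_of_le_of_lt (min_le_left _ _) (by linarith)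
  simp only [hpa, hpb]
  exact max_lt (lt_of_le_of_lt ha hlt) (lt_of_le_of_lt hb hlt)

lemma corner_interior {S : Finset (ℤ × ℤ)} {v : ℤ × ℤ}
    (hp : ((v.1 : ℝ), (v.2 : ℝ)) ∈ U S) : interiorVertex S v := by
  obtain ⟨δ, hδ0, hδ1, hmem⟩ := U_nearby hp
  have habs : |δ| ≤ δ := le_of_eq (abs_of_pos hδ0)
  have habs' : |(-δ)| ≤ δ := by rw [abs_neg]; exact habs
  have get : ∀ a b : ℝ, |a| ≤ δ → |b| ≤ δ → ∃ m ∈ S, ((v.1 : ℝ) + a, (v.2 : ℝ) + b) ∈ unitSq m :=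
    fun a b ha hb => exists_sq (hmem a b ha hb)
  refine ⟨?_, ?_, ?_, ?_⟩
  · obtain ⟨m, hm, hu⟩ := get (-δ) (-δ) habs' habs'
    rw [mem_unitSq] at hu; dsimp only at hu
    have e1 : m.1 = v.1 - 1 := pinX (a := v.1 - 1) (by push_cast; linarith) (by push_cast; linarith) hu.1.1 hu.1.2
    have e2 : m.2 = v.2 - 1 := pinX (a := v.2 - 1) (by push_cast; linarith) (by push_cast; linarith) hu.2.1 hu.2.2
    obtain ⟨m1, m2⟩ := m; dsimp only at e1 e2; rw [e1, e2] at hm; exact hm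
  · obtain ⟨m, hm, hu⟩ := get (-δ) δ habs' habs
    rw [mem_unitSq] at hu; dsimp only at hu
    have e1 : m.1 = v.1 - 1 := pinX (a := v.1 - 1) (by push_cast; linarith) (by push_cast; linarith) hu.1.1 hu.1.2
    have e2 : m.2 = v.2 := pinX (a := v.2) (by linarith) (by linarith) hu.2.1 hu.2.2
    obtain ⟨m1, m2⟩ := m; dsimp only at e1 e2; rw [e1, e2] at hm; exact hm
  · obtain ⟨m, hm, hu⟩ := get δ (-δ) habs habs'
    rw [mem_unitSq] at hu; dsimp only at hu
    have e1 : m.1 = v.1 := pinX (a := v.1) (by linarith) (by linarith) hu.1.1 hu.1.2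
    have e2 : m.2 = v.2 - 1 := pinX (a := v.2 - 1) (by push_cast; linarith) (by push_cast; linarith) hu.2.1 hu.2.2
    obtain ⟨m1, m2⟩ := m; dsimp only at e1 e2; rw [e1, e2] at hm; exact hm
  · obtain ⟨m, hm, hu⟩ := get δ δ habs habs
    rw [mem_unitSq] at hu; dsimp only at hu
    have e1 : m.1 = v.1 := pinX (a := v.1) (by linarith) (by linarith) hu.1.1 hu.1.2
    have e2 : m.2 = v.2 := pinX (a := v.2) (by linarith) (by linarith) hu.2.1 hu.2.2
    obtain ⟨m1, m2⟩ := m; dsimp only at e1 e2; rw [e1, e2] at hm; exact hm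

lemma bottom_edge_squares {S : Finset (ℤ × ℤ)} {i j : ℤ} {x : ℝ}
    (hx1 : (i : ℝ) < x) (hx2 : x < (i : ℝ) + 1) (hp : (x, (j : ℝ)) ∈ U S) :
    (i, j - 1) ∈ S ∧ (i, j) ∈ S := by
  obtain ⟨δ, hδ0, hδ1, hmem⟩ := U_nearby hp
  have habs : |δ| ≤ δ := le_of_eq (abs_of_pos hδ0)
  have habs' : |(-δ)| ≤ δ := by rw [abs_neg]; exact habs
  have h0 : |(0 : ℝ)| ≤ δ := by simp [hδ0.le]
  constructor
  · obtain ⟨m, hm, hu⟩ := exists_sq (hmem 0 (-δ) h0 habs')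
    rw [mem_unitSq] at hu; dsimp only at hu
    have e1 : m.1 = i := pinX (a := i) (by simpa using hx1) (by simpa using hx2) hu.1.1 hu.1.2
    have e2 : m.2 = j - 1 := pinX (a := j - 1) (by push_cast; linarith) (by push_cast; linarith) hu.2.1 hu.2.2
    obtain ⟨m1, m2⟩ := m; dsimp only at e1 e2; rw [e1, e2] at hm; exact hm
  · obtain ⟨m, hm, hu⟩ := exists_sq (hmem 0 δ h0 habs)
    rw [mem_unitSq] at hu; dsimp only at hu
    have e1 : m.1 = i := pinX (a := i) (by simpa using hx1) (by simpa using hx2) hu.1.1 hu.1.2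
    have e2 : m.2 = j := pinX (a := j) (by linarith) (by linarith) hu.2.1 hu.2.2
    obtain ⟨m1, m2⟩ := m; dsimp only at e1 e2; rw [e1, e2] at hm; exact hm

lemma left_edge_squares {S : Finset (ℤ × ℤ)} {i j : ℤ} {y : ℝ}
    (hy1 : (j : ℝ) < y) (hy2 : y < (j : ℝ) + 1) (hp : ((i : ℝ), y) ∈ U S) :
    (i - 1, j) ∈ S ∧ (i, j) ∈ S := by
  obtain ⟨δ, hδ0, hδ1, hmem⟩ := U_nearby hp
  have habs : |δ| ≤ δ := le_of_eq (abs_of_pos hδ0)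
  have habs' : |(-δ)| ≤ δ := by rw [abs_neg]; exact habs
  have h0 : |(0 : ℝ)| ≤ δ := by simp [hδ0.le]
  constructor
  · obtain ⟨m, hm, hu⟩ := exists_sq (hmem (-δ) 0 habs' h0)
    rw [mem_unitSq] at hu; dsimp only at hu
    have e1 : m.1 = i - 1 := pinX (a := i - 1) (by push_cast; linarith) (by push_cast; linarith) hu.1.1 hu.1.2
    have e2 : m.2 = j := pinX (a := j) (by simpa using hy1) (by simpa using hy2) hu.2.1 hu.2.2
    obtain ⟨m1, m2⟩ := m; dsimp only at e1 e2; rw [e1, e2] at hm; exact hm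
  · obtain ⟨m, hm, hu⟩ := exists_sq (hmem δ 0 habs h0)
    rw [mem_unitSq] at hu; dsimp only at hu
    have e1 : m.1 = i := pinX (a := i) (by linarith) (by linarith) hu.1.1 hu.1.2
    have e2 : m.2 = j := pinX (a := j) (by simpa using hy1) (by simpa using hy2) hu.2.1 hu.2.2
    obtain ⟨m1, m2⟩ := m; dsimp only at e1 e2; rw [e1, e2] at hm; exact hm

end RBAux

namespace RBAux
open Set

section Pieces
variable {S : Finset (ℤ × ℤ)} {i j : ℤ}

lemma pieceB1 (hv : interiorVertex S (i, j)) :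
    Ico (i : ℝ) ((i : ℝ) + 1) ×ˢ {(j : ℝ)} ⊆ Dq S (i, j) := by
  rintro ⟨px, py⟩ ⟨hx, hy⟩
  simp only [Set.mem_Ico] at hx
  simp only [Set.mem_singleton_iff] at hy
  subst hy
  refine ⟨⟨mem_unitSq.mpr ⟨⟨hx.1, hx.2.le⟩, le_refl _, by linarith⟩, fun hopen => ?_⟩, ?_⟩
  · rw [mem_openSq] at hopen; exact lt_irrefl _ hopen.2.1
  · rcases eq_or_lt_of_le hx.1 with he | hlt
    · rw [← he]
      exact vertex_mem_U hv
    · exact bottomEdge_subset_U hv.2.2.2 hv.2.2.1 ⟨⟨hlt, hx.2⟩, rfl⟩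

lemma pieceB2 (hv : interiorVertex S (i + 1, j)) :
    Ioc (i : ℝ) ((i : ℝ) + 1) ×ˢ {(j : ℝ)} ⊆ Dq S (i, j) := by
  have h10 : (i, j) ∈ S := by simpa using hv.2.1
  have h11 : (i, j - 1) ∈ S := by simpa using hv.1
  rintro ⟨px, py⟩ ⟨hx, hy⟩
  simp only [Set.mem_Ioc] at hx
  simp only [Set.mem_singleton_iff] at hy
  subst hy
  refine ⟨⟨mem_unitSq.mpr ⟨⟨hx.1.le, hx.2⟩, le_refl _, by linarith⟩, fun hopen => ?_⟩, ?_⟩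
  · rw [mem_openSq] at hopen; exact lt_irrefl _ hopen.2.1
  · rcases eq_or_lt_of_le hx.2 with he | hlt
    · rw [he, show ((i : ℝ) + 1) = (((i + 1 : ℤ) : ℝ)) by push_cast; ring]
      exact vertex_mem_U hv
    · exact bottomEdge_subset_U h10 h11 ⟨⟨hx.1, hlt⟩, rfl⟩

lemma pieceT3 (hv : interiorVertex S (i, j + 1)) :
    Ico (i : ℝ) ((i : ℝ) + 1) ×ˢ {(j : ℝ) + 1} ⊆ Dq S (i, j) := by
  have h10 : (i, j + 1) ∈ S := hv.2.2.2
  have h11 : (i, j) ∈ S := by simpa using hv.2.2.1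
  rintro ⟨px, py⟩ ⟨hx, hy⟩
  simp only [Set.mem_Ico] at hx
  simp only [Set.mem_singleton_iff] at hy
  subst hy
  refine ⟨⟨mem_unitSq.mpr ⟨⟨hx.1, hx.2.le⟩, by dsimp only; linarith, le_refl _⟩, fun hopen => ?_⟩, ?_⟩
  · rw [mem_openSq] at hopen; exact lt_irrefl _ hopen.2.2
  · rcases eq_or_lt_of_le hx.1 with he | hlt
    · rw [← he, show ((j : ℝ) + 1) = (((j + 1 : ℤ) : ℝ)) by push_cast; ring]
      exact vertex_mem_U hv
    · refine bottomEdge_subset_U (j := j + 1) h10 (by simpa using h11) ⟨⟨hlt, hx.2⟩, ?_⟩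
      show ((j : ℝ) + 1) = (((j + 1 : ℤ) : ℝ))
      push_cast; ring

lemma pieceT4 (hv : interiorVertex S (i + 1, j + 1)) :
    Ioc (i : ℝ) ((i : ℝ) + 1) ×ˢ {(j : ℝ) + 1} ⊆ Dq S (i, j) := by
  have h10 : (i, j + 1) ∈ S := by simpa using hv.2.1
  have h11 : (i, j) ∈ S := by simpa using hv.1
  rintro ⟨px, py⟩ ⟨hx, hy⟩
  simp only [Set.mem_Ioc] at hx
  simp only [Set.mem_singleton_iff] at hy
  subst hy
  refine ⟨⟨mem_unitSq.mpr ⟨⟨hx.1.le, hx.2⟩, by dsimp only; linarith, le_refl _⟩, fun hopen => ?_⟩, ?_⟩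
  · rw [mem_openSq] at hopen; exact lt_irrefl _ hopen.2.2
  · rcases eq_or_lt_of_le hx.2 with he | hlt
    · rw [he, show ((i : ℝ) + 1) = (((i + 1 : ℤ) : ℝ)) by push_cast; ring,
        show ((j : ℝ) + 1) = (((j + 1 : ℤ) : ℝ)) by push_cast; ring]
      exact vertex_mem_U hv
    · refine bottomEdge_subset_U (j := j + 1) h10 (by simpa using h11) ⟨⟨hx.1, hlt⟩, ?_⟩
      show ((j : ℝ) + 1) = (((j + 1 : ℤ) : ℝ))
      push_cast; ring

lemma pieceL1 (hv : interiorVertex S (i, j)) :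
    {(i : ℝ)} ×ˢ Ico (j : ℝ) ((j : ℝ) + 1) ⊆ Dq S (i, j) := by
  rintro ⟨px, py⟩ ⟨hx, hy⟩
  simp only [Set.mem_Ico] at hy
  simp only [Set.mem_singleton_iff] at hx
  subst hx
  refine ⟨⟨mem_unitSq.mpr ⟨⟨le_refl _, by linarith⟩, hy.1, hy.2.le⟩, fun hopen => ?_⟩, ?_⟩
  · rw [mem_openSq] at hopen; exact lt_irrefl _ hopen.1.1
  · rcases eq_or_lt_of_le hy.1 with he | hlt
    · rw [← he]
      exact vertex_mem_U hv
    · exact leftEdge_subset_U hv.2.2.2 hv.2.1 ⟨rfl, hlt, hy.2⟩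

lemma pieceL3 (hv : interiorVertex S (i, j + 1)) :
    {(i : ℝ)} ×ˢ Ioc (j : ℝ) ((j : ℝ) + 1) ⊆ Dq S (i, j) := by
  have h10 : (i, j) ∈ S := by simpa using hv.2.2.1
  have h11 : (i - 1, j) ∈ S := by simpa using hv.1
  rintro ⟨px, py⟩ ⟨hx, hy⟩
  simp only [Set.mem_Ioc] at hy
  simp only [Set.mem_singleton_iff] at hx
  subst hx
  refine ⟨⟨mem_unitSq.mpr ⟨⟨le_refl _, by linarith⟩, hy.1.le, hy.2⟩, fun hopen => ?_⟩, ?_⟩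
  · rw [mem_openSq] at hopen; exact lt_irrefl _ hopen.1.1
  · rcases eq_or_lt_of_le hy.2 with he | hlt
    · rw [he, show ((j : ℝ) + 1) = (((j + 1 : ℤ) : ℝ)) by push_cast; ring]
      exact vertex_mem_U hv
    · exact leftEdge_subset_U h10 h11 ⟨rfl, hy.1, hlt⟩

lemma pieceR2 (hv : interiorVertex S (i + 1, j)) :
    {(i : ℝ) + 1} ×ˢ Ico (j : ℝ) ((j : ℝ) + 1) ⊆ Dq S (i, j) := by
  have h10 : (i + 1, j) ∈ S := hv.2.2.2
  have h11 : (i, j) ∈ S := by simpa using hv.2.1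
  rintro ⟨px, py⟩ ⟨hx, hy⟩
  simp only [Set.mem_Ico] at hy
  simp only [Set.mem_singleton_iff] at hx
  subst hx
  refine ⟨⟨mem_unitSq.mpr ⟨⟨by dsimp only; linarith, le_refl _⟩, hy.1, hy.2.le⟩, fun hopen => ?_⟩, ?_⟩
  · rw [mem_openSq] at hopen; exact lt_irrefl _ hopen.1.2
  · rcases eq_or_lt_of_le hy.1 with he | hlt
    · rw [← he, show ((i : ℝ) + 1) = (((i + 1 : ℤ) : ℝ)) by push_cast; ring]
      exact vertex_mem_U hv
    · refine leftEdge_subset_U (i := i + 1) h10 (by simpa using h11) ⟨?_, hlt, hy.2⟩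
      show ((i : ℝ) + 1) = (((i + 1 : ℤ) : ℝ))
      push_cast; ring

lemma pieceR4 (hv : interiorVertex S (i + 1, j + 1)) :
    {(i : ℝ) + 1} ×ˢ Ioc (j : ℝ) ((j : ℝ) + 1) ⊆ Dq S (i, j) := by
  have h10 : (i + 1, j) ∈ S := by simpa using hv.2.2.1
  have h11 : (i, j) ∈ S := by simpa using hv.1
  rintro ⟨px, py⟩ ⟨hx, hy⟩
  simp only [Set.mem_Ioc] at hy
  simp only [Set.mem_singleton_iff] at hx
  subst hx
  refine ⟨⟨mem_unitSq.mpr ⟨⟨by dsimp only; linarith, le_refl _⟩, hy.1.le, hy.2⟩, fun hopen => ?_⟩, ?_⟩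
  · rw [mem_openSq] at hopen; exact lt_irrefl _ hopen.1.2
  · rcases eq_or_lt_of_le hy.2 with he | hlt
    · rw [he, show ((i : ℝ) + 1) = (((i + 1 : ℤ) : ℝ)) by push_cast; ring,
        show ((j : ℝ) + 1) = (((j + 1 : ℤ) : ℝ)) by push_cast; ring]
      exact vertex_mem_U hv
    · refine leftEdge_subset_U (i := i + 1) h10 (by simpa using h11) ⟨?_, hy.1, hlt⟩
      show ((i : ℝ) + 1) = (((i + 1 : ℤ) : ℝ))
      push_cast; ring

lemma closedB (h1 : interiorVertex S (i, j)) (h2 : interiorVertex S (i + 1, j)) :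
    Icc (i : ℝ) ((i : ℝ) + 1) ×ˢ {(j : ℝ)} ⊆ Dq S (i, j) := by
  rintro ⟨px, py⟩ ⟨hx, hy⟩
  simp only [Set.mem_Icc] at hx
  rcases eq_or_lt_of_le hx.2 with he | hl
  · exact pieceB2 h2 ⟨⟨by dsimp only; rw [he]; linarith, le_of_eq he⟩, hy⟩
  · exact pieceB1 h1 ⟨⟨hx.1, hl⟩, hy⟩

lemma closedT (h3 : interiorVertex S (i, j + 1)) (h4 : interiorVertex S (i + 1, j + 1)) :
    Icc (i : ℝ) ((i : ℝ) + 1) ×ˢ {(j : ℝ) + 1} ⊆ Dq S (i, j) := by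
  rintro ⟨px, py⟩ ⟨hx, hy⟩
  simp only [Set.mem_Icc] at hx
  rcases eq_or_lt_of_le hx.2 with he | hl
  · exact pieceT4 h4 ⟨⟨by dsimp only; rw [he]; linarith, le_of_eq he⟩, hy⟩
  · exact pieceT3 h3 ⟨⟨hx.1, hl⟩, hy⟩

lemma closedL (h1 : interiorVertex S (i, j)) (h3 : interiorVertex S (i, j + 1)) :
    {(i : ℝ)} ×ˢ Icc (j : ℝ) ((j : ℝ) + 1) ⊆ Dq S (i, j) := by
  rintro ⟨px, py⟩ ⟨hx, hy⟩
  simp only [Set.mem_Icc] at hy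
  rcases eq_or_lt_of_le hy.2 with he | hl
  · exact pieceL3 h3 ⟨hx, by dsimp only; rw [he]; linarith, le_of_eq he⟩
  · exact pieceL1 h1 ⟨hx, hy.1, hl⟩

lemma closedR (h2 : interiorVertex S (i + 1, j)) (h4 : interiorVertex S (i + 1, j + 1)) :
    {(i : ℝ) + 1} ×ˢ Icc (j : ℝ) ((j : ℝ) + 1) ⊆ Dq S (i, j) := by
  rintro ⟨px, py⟩ ⟨hx, hy⟩
  simp only [Set.mem_Icc] at hy
  rcases eq_or_lt_of_le hy.2 with he | hl
  · exact pieceR4 h4 ⟨hx, by dsimp only; rw [he]; linarith, le_of_eq he⟩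
  · exact pieceR2 h2 ⟨hx, hy.1, hl⟩

end Pieces
end RBAux

namespace RBAux
open Set

lemma joinedIn_of_convex {s t : Set (ℝ × ℝ)} (hs : Convex ℝ s) (hst : s ⊆ t)
    {x y : ℝ × ℝ} (hx : x ∈ s) (hy : y ∈ s) : JoinedIn t x y :=
  JoinedIn.of_segment_subset ((hs.segment_subset hx hy).trans hst)

lemma Dq_cases {S : Finset (ℤ × ℤ)} {i j : ℤ} {p : ℝ × ℝ} (hp : p ∈ Dq S (i, j)) :
    (p = ((i : ℝ), (j : ℝ)) ∧ interiorVertex S (i, j)) ∨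
    (p = ((i : ℝ) + 1, (j : ℝ)) ∧ interiorVertex S (i + 1, j)) ∨
    (p = ((i : ℝ), (j : ℝ) + 1) ∧ interiorVertex S (i, j + 1)) ∨
    (p = ((i : ℝ) + 1, (j : ℝ) + 1) ∧ interiorVertex S (i + 1, j + 1)) ∨
    (p.2 = (j : ℝ) ∧ (i : ℝ) < p.1 ∧ p.1 < (i : ℝ) + 1 ∧ (i, j - 1) ∈ S ∧ (i, j) ∈ S) ∨
    (p.2 = (j : ℝ) + 1 ∧ (i : ℝ) < p.1 ∧ p.1 < (i : ℝ) + 1 ∧ (i, j) ∈ S ∧ (i, j + 1) ∈ S) ∨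
    (p.1 = (i : ℝ) ∧ (j : ℝ) < p.2 ∧ p.2 < (j : ℝ) + 1 ∧ (i - 1, j) ∈ S ∧ (i, j) ∈ S) ∨
    (p.1 = (i : ℝ) + 1 ∧ (j : ℝ) < p.2 ∧ p.2 < (j : ℝ) + 1 ∧ (i, j) ∈ S ∧ (i + 1, j) ∈ S) := by
  obtain ⟨⟨hsq, hno⟩, hU⟩ := hp
  obtain ⟨px, py⟩ := p
  rw [mem_unitSq] at hsq
  dsimp only at hsq hU ⊢
  obtain ⟨⟨ha1, ha2⟩, hb1, hb2⟩ := hsq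
  have hci : ((i + 1 : ℤ) : ℝ) = (i : ℝ) + 1 := by push_cast; ring
  have hcj : ((j + 1 : ℤ) : ℝ) = (j : ℝ) + 1 := by push_cast; ring
  have hedge : px = (i : ℝ) ∨ px = (i : ℝ) + 1 ∨ py = (j : ℝ) ∨ py = (j : ℝ) + 1 := by
    by_contra hc; push_neg at hc
    exact hno (mem_openSq.mpr ⟨⟨lt_of_le_of_ne ha1 (Ne.symm hc.1), lt_of_le_of_ne ha2 hc.2.1⟩,
      lt_of_le_of_ne hb1 (Ne.symm hc.2.2.1), lt_of_le_of_ne hb2 hc.2.2.2⟩)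
  rcases hedge with hE | hE | hE | hE
  · subst hE
    rcases eq_or_lt_of_le hb1 with hB | hB
    · exact Or.inl ⟨by rw [← hB], corner_interior (v := (i, j)) (by rw [← hB] at hU; exact hU)⟩
    · rcases eq_or_lt_of_le hb2 with hB2 | hB2
      · refine Or.inr (Or.inr (Or.inl ⟨by rw [hB2], ?_⟩))
        apply corner_interior (v := (i, j + 1))
        dsimp only; push_cast
        rw [← hB2]; exact hU
      · have hLR := left_edge_squares hB hB2 hU
        exact Or.inr (Or.inr (Or.inr (Or.inr (Or.inr (Or.inr (Or.inl ⟨rfl, hB, hB2, hLR.1, hLR.2⟩))))))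
  · subst hE
    rcases eq_or_lt_of_le hb1 with hB | hB
    · refine Or.inr (Or.inl ⟨by rw [← hB], ?_⟩)
      apply corner_interior (v := (i + 1, j))
      dsimp only; push_cast
      rw [hB]; exact hU
    · rcases eq_or_lt_of_le hb2 with hB2 | hB2
      · refine Or.inr (Or.inr (Or.inr (Or.inl ⟨by rw [hB2], ?_⟩)))
        apply corner_interior (v := (i + 1, j + 1))
        dsimp only; push_cast
        rw [← hB2]; exact hU
      · have hLR := left_edge_squares (i := i + 1) hB hB2 (by rw [hci]; exact hU)
        have hs1 : (i, j) ∈ S := by simpa using hLR.1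
        exact Or.inr (Or.inr (Or.inr (Or.inr (Or.inr (Or.inr (Or.inr ⟨rfl, hB, hB2, hs1, hLR.2⟩))))))
  · subst hE
    rcases eq_or_lt_of_le ha1 with hA | hA
    · exact Or.inl ⟨by rw [← hA], corner_interior (v := (i, j)) (by rw [← hA] at hU; exact hU)⟩
    · rcases eq_or_lt_of_le ha2 with hA2 | hA2
      · refine Or.inr (Or.inl ⟨by rw [hA2], ?_⟩)
        apply corner_interior (v := (i + 1, j))
        rw [hA2] at hU; rw [hci]; exact hU
      · have hBT := bottom_edge_squares hA hA2 hU
        exact Or.inr (Or.inr (Or.inr (Or.inr (Or.inl ⟨rfl, hA, hA2, hBT.1, hBT.2⟩))))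
  · subst hE
    rcases eq_or_lt_of_le ha1 with hA | hA
    · refine Or.inr (Or.inr (Or.inl ⟨by rw [← hA], ?_⟩))
      apply corner_interior (v := (i, j + 1))
      dsimp only; push_cast
      rw [hA]; exact hU
    · rcases eq_or_lt_of_le ha2 with hA2 | hA2
      · refine Or.inr (Or.inr (Or.inr (Or.inl ⟨by rw [hA2], ?_⟩)))
        apply corner_interior (v := (i + 1, j + 1))
        dsimp only; push_cast
        rw [← hA2]; exact hU
      · have hBT := bottom_edge_squares (j := j + 1) hA hA2 (by rw [hcj]; exact hU)
        have hs1 : (i, j) ∈ S := by simpa using hBT.1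
        exact Or.inr (Or.inr (Or.inr (Or.inr (Or.inr (Or.inl ⟨rfl, hA, hA2, hs1, hBT.2⟩)))))

lemma exists_interior_corner {S : Finset (ℤ × ℤ)} (h : Standing S) {i j : ℤ}
    (hq : (i, j) ∈ S) :
    interiorVertex S (i, j) ∨ interiorVertex S (i + 1, j) ∨
      interiorVertex S (i, j + 1) ∨ interiorVertex S (i + 1, j + 1) := by
  by_contra hc; push_neg at hc
  exact h.noFourBoundary (i, j) hq
    ⟨⟨Or.inr (Or.inr (Or.inr hq)), hc.1⟩,
     ⟨Or.inr (Or.inl (by simpa using hq)), hc.2.1⟩,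
     ⟨Or.inr (Or.inr (Or.inl (by simpa using hq))), hc.2.2.1⟩,
     ⟨Or.inl (by simpa using hq), hc.2.2.2⟩⟩

lemma Dq_pathConnected {S : Finset (ℤ × ℤ)} (hst : Standing S) {q : ℤ × ℤ} (hq : q ∈ S) :
    IsPathConnected (Dq S q) := by
  obtain ⟨i, j⟩ := q
  have hIor := exists_interior_corner hst hq
  have mv1 : meshVertex S (i, j) := Or.inr (Or.inr (Or.inr hq))
  have mv2 : meshVertex S (i + 1, j) := Or.inr (Or.inl (by simpa using hq))
  have mv3 : meshVertex S (i, j + 1) := Or.inr (Or.inr (Or.inl (by simpa using hq)))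
  have mv4 : meshVertex S (i + 1, j + 1) := Or.inl (by simpa using hq)
  have mem1 : interiorVertex S (i, j) → ((i : ℝ), (j : ℝ)) ∈ Dq S (i, j) := fun h1 =>
    pieceB1 h1 ⟨⟨le_refl _, by dsimp only; linarith⟩, rfl⟩
  have mem2 : interiorVertex S (i + 1, j) → ((i : ℝ) + 1, (j : ℝ)) ∈ Dq S (i, j) := fun h2 =>
    pieceB2 h2 ⟨⟨by dsimp only; linarith, le_refl _⟩, rfl⟩
  have mem3 : interiorVertex S (i, j + 1) → ((i : ℝ), (j : ℝ) + 1) ∈ Dq S (i, j) := fun h3 =>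
    pieceT3 h3 ⟨⟨le_refl _, by dsimp only; linarith⟩, rfl⟩
  have mem4 : interiorVertex S (i + 1, j + 1) → ((i : ℝ) + 1, (j : ℝ) + 1) ∈ Dq S (i, j) := fun h4 =>
    pieceT4 h4 ⟨⟨by dsimp only; linarith, le_refl _⟩, rfl⟩
  have j12 : interiorVertex S (i, j) → interiorVertex S (i + 1, j) →
      JoinedIn (Dq S (i, j)) ((i : ℝ), (j : ℝ)) ((i : ℝ) + 1, (j : ℝ)) := fun a b =>
    joinedIn_of_convex ((convex_Icc _ _).prod (convex_singleton _)) (closedB a b)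
      ⟨⟨le_refl _, by dsimp only; linarith⟩, rfl⟩ ⟨⟨by dsimp only; linarith, le_refl _⟩, rfl⟩
  have j34 : interiorVertex S (i, j + 1) → interiorVertex S (i + 1, j + 1) →
      JoinedIn (Dq S (i, j)) ((i : ℝ), (j : ℝ) + 1) ((i : ℝ) + 1, (j : ℝ) + 1) := fun a b =>
    joinedIn_of_convex ((convex_Icc _ _).prod (convex_singleton _)) (closedT a b)
      ⟨⟨le_refl _, by dsimp only; linarith⟩, rfl⟩ ⟨⟨by dsimp only; linarith, le_refl _⟩, rfl⟩
  have j13 : interiorVertex S (i, j) → interiorVertex S (i, j + 1) →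
      JoinedIn (Dq S (i, j)) ((i : ℝ), (j : ℝ)) ((i : ℝ), (j : ℝ) + 1) := fun a b =>
    joinedIn_of_convex ((convex_singleton _).prod (convex_Icc _ _)) (closedL a b)
      ⟨rfl, le_refl _, by dsimp only; linarith⟩ ⟨rfl, by dsimp only; linarith, le_refl _⟩
  have j24 : interiorVertex S (i + 1, j) → interiorVertex S (i + 1, j + 1) →
      JoinedIn (Dq S (i, j)) ((i : ℝ) + 1, (j : ℝ)) ((i : ℝ) + 1, (j : ℝ) + 1) := fun a b =>
    joinedIn_of_convex ((convex_singleton _).prod (convex_Icc _ _)) (closedR a b)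
      ⟨rfl, le_refl _, by dsimp only; linarith⟩ ⟨rfl, by dsimp only; linarith, le_refl _⟩
  have d14 : interiorVertex S (i, j) → interiorVertex S (i + 1, j + 1) →
      interiorVertex S (i + 1, j) ∨ interiorVertex S (i, j + 1) := by
    intro a b; by_contra hc; push_neg at hc
    exact hst.noDiagTwo (i, j) hq ⟨⟨mv2, hc.1⟩, ⟨mv3, hc.2⟩, a, b⟩
  have d23 : interiorVertex S (i + 1, j) → interiorVertex S (i, j + 1) →
      interiorVertex S (i, j) ∨ interiorVertex S (i + 1, j + 1) := by
    intro a b; by_contra hc; push_neg at hc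
    exact hst.noDiagOne (i, j) hq ⟨⟨mv1, hc.1⟩, ⟨mv4, hc.2⟩, a, b⟩
  have claimA : ∀ p ∈ Dq S (i, j),
      (interiorVertex S (i, j) ∧ JoinedIn (Dq S (i, j)) p ((i : ℝ), (j : ℝ))) ∨
      (interiorVertex S (i + 1, j) ∧ JoinedIn (Dq S (i, j)) p ((i : ℝ) + 1, (j : ℝ))) ∨
      (interiorVertex S (i, j + 1) ∧ JoinedIn (Dq S (i, j)) p ((i : ℝ), (j : ℝ) + 1)) ∨
      (interiorVertex S (i + 1, j + 1) ∧ JoinedIn (Dq S (i, j)) p ((i : ℝ) + 1, (j : ℝ) + 1)) := by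
    intro p hp
    rcases Dq_cases hp with ⟨hpe, hI⟩ | ⟨hpe, hI⟩ | ⟨hpe, hI⟩ | ⟨hpe, hI⟩ |
      ⟨he, h1, h2, hs1, hs2⟩ | ⟨he, h1, h2, hs1, hs2⟩ | ⟨he, h1, h2, hs1, hs2⟩ | ⟨he, h1, h2, hs1, hs2⟩
    · exact Or.inl ⟨hI, by rw [hpe]; exact JoinedIn.refl (mem1 hI)⟩
    · exact Or.inr (Or.inl ⟨hI, by rw [hpe]; exact JoinedIn.refl (mem2 hI)⟩)
    · exact Or.inr (Or.inr (Or.inl ⟨hI, by rw [hpe]; exact JoinedIn.refl (mem3 hI)⟩))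
    · exact Or.inr (Or.inr (Or.inr ⟨hI, by rw [hpe]; exact JoinedIn.refl (mem4 hI)⟩))
    · rcases hst.edgeH (i, j) hs2 hs1 with hI | hI
      · exact Or.inl ⟨hI, joinedIn_of_convex ((convex_Ico _ _).prod (convex_singleton _))
          (pieceB1 hI) ⟨⟨h1.le, h2⟩, he⟩ ⟨⟨le_refl _, by dsimp only; linarith⟩, rfl⟩⟩
      · exact Or.inr (Or.inl ⟨hI, joinedIn_of_convex ((convex_Ioc _ _).prod (convex_singleton _))
          (pieceB2 hI) ⟨⟨h1, h2.le⟩, he⟩ ⟨⟨by dsimp only; linarith, le_refl _⟩, rfl⟩⟩)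
    · rcases hst.edgeH (i, j + 1) hs2 (by simpa using hs1) with hI | hI
      · exact Or.inr (Or.inr (Or.inl ⟨hI, joinedIn_of_convex
          ((convex_Ico _ _).prod (convex_singleton _)) (pieceT3 hI)
          ⟨⟨h1.le, h2⟩, he⟩ ⟨⟨le_refl _, by dsimp only; linarith⟩, rfl⟩⟩))
      · exact Or.inr (Or.inr (Or.inr ⟨hI, joinedIn_of_convex
          ((convex_Ioc _ _).prod (convex_singleton _)) (pieceT4 hI)
          ⟨⟨h1, h2.le⟩, he⟩ ⟨⟨by dsimp only; linarith, le_refl _⟩, rfl⟩⟩))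
    · rcases hst.edgeV (i, j) hs2 hs1 with hI | hI
      · exact Or.inl ⟨hI, joinedIn_of_convex ((convex_singleton _).prod (convex_Ico _ _))
          (pieceL1 hI) ⟨he, h1.le, h2⟩ ⟨rfl, le_refl _, by dsimp only; linarith⟩⟩
      · exact Or.inr (Or.inr (Or.inl ⟨hI, joinedIn_of_convex
          ((convex_singleton _).prod (convex_Ioc _ _)) (pieceL3 hI)
          ⟨he, h1, h2.le⟩ ⟨rfl, by dsimp only; linarith, le_refl _⟩⟩))
    · rcases hst.edgeV (i + 1, j) hs2 (by simpa using hs1) with hI | hI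
      · exact Or.inr (Or.inl ⟨hI, joinedIn_of_convex
          ((convex_singleton _).prod (convex_Ico _ _)) (pieceR2 hI)
          ⟨he, h1.le, h2⟩ ⟨rfl, le_refl _, by dsimp only; linarith⟩⟩)
      · exact Or.inr (Or.inr (Or.inr ⟨hI, joinedIn_of_convex
          ((convex_singleton _).prod (convex_Ioc _ _)) (pieceR4 hI)
          ⟨he, h1, h2.le⟩ ⟨rfl, by dsimp only; linarith, le_refl _⟩⟩))
  rcases hIor with hB | hB | hB | hB
  · refine ⟨((i : ℝ), (j : ℝ)), mem1 hB, ?_⟩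
    intro p hp
    rcases claimA p hp with ⟨hI, hj⟩ | ⟨hI, hj⟩ | ⟨hI, hj⟩ | ⟨hI, hj⟩
    · exact hj.symm
    · exact (j12 hB hI).trans hj.symm
    · exact (j13 hB hI).trans hj.symm
    · rcases d14 hB hI with h2' | h3'
      · exact ((j12 hB h2').trans (j24 h2' hI)).trans hj.symm
      · exact ((j13 hB h3').trans (j34 h3' hI)).trans hj.symm
  · refine ⟨((i : ℝ) + 1, (j : ℝ)), mem2 hB, ?_⟩
    intro p hp
    rcases claimA p hp with ⟨hI, hj⟩ | ⟨hI, hj⟩ | ⟨hI, hj⟩ | ⟨hI, hj⟩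
    · exact (j12 hI hB).symm.trans hj.symm
    · exact hj.symm
    · rcases d23 hB hI with h1' | h4'
      · exact ((j12 h1' hB).symm.trans (j13 h1' hI)).trans hj.symm
      · exact ((j24 hB h4').trans (j34 hI h4').symm).trans hj.symm
    · exact (j24 hB hI).trans hj.symm
  · refine ⟨((i : ℝ), (j : ℝ) + 1), mem3 hB, ?_⟩
    intro p hp
    rcases claimA p hp with ⟨hI, hj⟩ | ⟨hI, hj⟩ | ⟨hI, hj⟩ | ⟨hI, hj⟩
    · exact (j13 hI hB).symm.trans hj.symm
    · rcases d23 hI hB with h1' | h4'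
      · exact ((j13 h1' hB).symm.trans (j12 h1' hI)).trans hj.symm
      · exact ((j34 hB h4').trans (j24 hI h4').symm).trans hj.symm
    · exact hj.symm
    · exact (j34 hB hI).trans hj.symm
  · refine ⟨((i : ℝ) + 1, (j : ℝ) + 1), mem4 hB, ?_⟩
    intro p hp
    rcases claimA p hp with ⟨hI, hj⟩ | ⟨hI, hj⟩ | ⟨hI, hj⟩ | ⟨hI, hj⟩
    · rcases d14 hI hB with h2' | h3'
      · exact ((j24 h2' hB).symm.trans (j12 hI h2').symm).trans hj.symm
      · exact ((j34 h3' hB).symm.trans (j13 hI h3').symm).trans hj.symm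
    · exact (j24 hI hB).symm.trans hj.symm
    · exact (j34 hI hB).symm.trans hj.symm
    · exact hj.symm

lemma Aq_pathConnected {S : Finset (ℤ × ℤ)} {q : ℤ × ℤ} (hq : q ∈ S) :
    IsPathConnected (Aq S q) := by
  have hconv : Convex ℝ (unitSq q) := (convex_Icc _ _).prod (convex_Icc _ _)
  have hint : openSq q ⊆ interior (unitSq q) := by
    rw [unitSq, interior_prod_eq, interior_Icc, interior_Icc]
    exact fun p hp => hp
  have hint' : interior (unitSq q) ⊆ openSq q := by
    rw [unitSq, interior_prod_eq, interior_Icc, interior_Icc]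
    exact fun p hp => hp
  have hc : ctr q ∈ openSq q := ctr_mem_openSq q
  refine ⟨ctr q, ctr_mem_Aq hq, ?_⟩
  intro y hy
  apply (JoinedIn.of_segment_subset (y := y) ?_)
  intro z hz
  obtain ⟨a, b, ha, hb, hab, rfl⟩ := hz
  rcases eq_or_lt_of_le ha with ha0 | ha0
  · have hb1 : b = 1 := by linarith
    rw [← ha0, hb1]
    simpa using hy
  · have hzint : a • ctr q + b • y ∈ interior (unitSq q) :=
      hconv.combo_interior_closure_mem_interior (hint hc)
        (by rw [(isClosed_unitSq q).closure_eq]; exact hy.1) ha0 hb hab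
    exact ⟨interior_subset hzint, openSq_subset_U hq (hint' hzint)⟩

end RBAux

namespace RBAux
open Set

lemma corner_P {S : Finset (ℤ × ℤ)} (P : ℤ × ℤ → Prop)
    (hPr : ∀ a b : ℤ, P (a, b) ↔ ¬ P (a + 1, b)) {v : ℤ × ℤ} (hv : interiorVertex S v) :
    ∃ m, m ∈ S ∧ P m ∧ ((v.1 : ℝ), (v.2 : ℝ)) ∈ unitSq m := by
  by_cases hP : P v
  · exact ⟨v, hv.2.2.2, hP, mem_unitSq.mpr ⟨⟨le_refl _, by linarith⟩, le_refl _, by linarith⟩⟩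
  · refine ⟨(v.1 - 1, v.2), hv.2.1, ?_, ?_⟩
    · have h1 := hPr (v.1 - 1) v.2
      rw [show v.1 - 1 + 1 = v.1 by ring] at h1
      exact h1.mpr (by simpa using hP)
    · exact mem_unitSq.mpr ⟨⟨by push_cast; linarith, by push_cast; linarith⟩,
        by push_cast; linarith, by push_cast; linarith⟩

lemma Dq_subset_P {S : Finset (ℤ × ℤ)} (P : ℤ × ℤ → Prop)
    (hPr : ∀ a b : ℤ, P (a, b) ↔ ¬ P (a + 1, b)) (hPu : ∀ a b : ℤ, P (a, b) ↔ ¬ P (a, b + 1))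
    {i j : ℤ} (hmP : ¬ P (i, j)) {p : ℝ × ℝ} (hp : p ∈ Dq S (i, j)) :
    ∃ m, m ∈ S ∧ P m ∧ p ∈ unitSq m := by
  rcases Dq_cases hp with ⟨hpe, hI⟩ | ⟨hpe, hI⟩ | ⟨hpe, hI⟩ | ⟨hpe, hI⟩ |
    ⟨he, h1, h2, hs1, hs2⟩ | ⟨he, h1, h2, hs1, hs2⟩ | ⟨he, h1, h2, hs1, hs2⟩ | ⟨he, h1, h2, hs1, hs2⟩
  · obtain ⟨m, h1, h2, h3⟩ := corner_P P hPr hI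
    exact ⟨m, h1, h2, by rw [hpe]; exact h3⟩
  · obtain ⟨m, h1, h2, h3⟩ := corner_P P hPr hI
    refine ⟨m, h1, h2, ?_⟩
    rw [hpe]
    have : (((i + 1 : ℤ) : ℝ), ((j : ℤ) : ℝ)) = ((i : ℝ) + 1, (j : ℝ)) := by push_cast; rfl
    rw [← this]; exact h3
  · obtain ⟨m, h1, h2, h3⟩ := corner_P P hPr hI
    refine ⟨m, h1, h2, ?_⟩
    rw [hpe]
    have : (((i : ℤ) : ℝ), ((j + 1 : ℤ) : ℝ)) = ((i : ℝ), (j : ℝ) + 1) := by push_cast; rfl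
    rw [← this]; exact h3
  · obtain ⟨m, h1, h2, h3⟩ := corner_P P hPr hI
    refine ⟨m, h1, h2, ?_⟩
    rw [hpe]
    have : (((i + 1 : ℤ) : ℝ), ((j + 1 : ℤ) : ℝ)) = ((i : ℝ) + 1, (j : ℝ) + 1) := by push_cast; rfl
    rw [← this]; exact h3
  · -- bottom edge : use (i, j-1)
    refine ⟨(i, j - 1), hs1, ?_, ?_⟩
    · have h' := hPu i (j - 1)
      rw [show j - 1 + 1 = j by ring] at h'
      exact h'.mpr hmP
    · exact mem_unitSq.mpr ⟨⟨h1.le, h2.le⟩, by push_cast; linarith [he.ge, he.le],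
        by push_cast; linarith [he.ge, he.le]⟩
  · -- top edge : use (i, j+1)
    refine ⟨(i, j + 1), hs2, ?_, ?_⟩
    · have h' := hPu i j
      tauto
    · exact mem_unitSq.mpr ⟨⟨h1.le, h2.le⟩, by push_cast; linarith [he.ge, he.le],
        by push_cast; linarith [he.ge, he.le]⟩
  · -- left edge : use (i-1, j)
    refine ⟨(i - 1, j), hs1, ?_, ?_⟩
    · have h' := hPr (i - 1) j
      rw [show i - 1 + 1 = i by ring] at h'
      exact h'.mpr hmP
    · exact mem_unitSq.mpr ⟨⟨by push_cast; linarith [he.ge, he.le],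
        by push_cast; linarith [he.ge, he.le]⟩, h1.le, h2.le⟩
  · -- right edge : use (i+1, j)
    refine ⟨(i + 1, j), hs2, ?_, ?_⟩
    · have h' := hPr i j
      tauto
    · exact mem_unitSq.mpr ⟨⟨by push_cast; linarith [he.ge, he.le],
        by push_cast; linarith [he.ge, he.le]⟩, h1.le, h2.le⟩

lemma master {S : Finset (ℤ × ℤ)} (h : Standing S) (P : ℤ × ℤ → Prop) [DecidablePred P]
    (hPr : ∀ a b : ℤ, P (a, b) ↔ ¬ P (a + 1, b)) (hPu : ∀ a b : ℤ, P (a, b) ↔ ¬ P (a, b + 1)) :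
    IsPathConnected ((⋃ q ∈ S.filter fun q => P q, unitSq q) \ frontier (meshRegion S)) := by
  classical
  set R : Set (ℝ × ℝ) :=
    (⋃ q ∈ S.filter fun q => P q, unitSq q) \ frontier (meshRegion S) with hRdef
  have hAqR : ∀ {m : ℤ × ℤ}, m ∈ S → P m → Aq S m ⊆ R := by
    intro m hm hPm p hp
    refine ⟨Set.mem_iUnion₂.mpr ⟨m, Finset.mem_filter.mpr ⟨hm, hPm⟩, hp.1⟩, fun hf => ?_⟩
    rw [(isClosed_meshRegion S).frontier_eq] at hf
    exact hf.2 hp.2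
  have hRAq : ∀ {p : ℝ × ℝ}, p ∈ R → ∃ m, m ∈ S ∧ P m ∧ p ∈ Aq S m := by
    intro p hp
    obtain ⟨m, hm, hpm⟩ := Set.mem_iUnion₂.mp hp.1
    obtain ⟨hmS, hmP⟩ := Finset.mem_filter.mp hm
    have hpU : p ∈ U S := by
      have hclos : p ∈ meshRegion S := unitSq_subset_mesh hmS hpm
      by_contra hint
      exact hp.2 (by rw [(isClosed_meshRegion S).frontier_eq]; exact ⟨hclos, hint⟩)
    exact ⟨m, hmS, hmP, hpm, hpU⟩
  obtain ⟨q₀, hq₀⟩ := h.nonempty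
  have hIor0 := exists_interior_corner h (show (q₀.1, q₀.2) ∈ S from hq₀)
  have hex : ∃ v, interiorVertex S v := by
    rcases hIor0 with hv | hv | hv | hv
    exacts [⟨_, hv⟩, ⟨_, hv⟩, ⟨_, hv⟩, ⟨_, hv⟩]
  obtain ⟨v, hv⟩ := hex
  obtain ⟨m₀, hm₀S, hm₀P, _⟩ := corner_P P hPr hv
  have hx₀U : ctr m₀ ∈ U S := openSq_subset_U hm₀S (ctr_mem_openSq m₀)
  have hx₀A : ctr m₀ ∈ Aq S m₀ := ctr_mem_Aq hm₀S
  have hx₀R : ctr m₀ ∈ R := hAqR hm₀S hm₀P hx₀A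
  have key : ∀ m, m ∈ S → P m → JoinedIn R (ctr m₀) (ctr m) := by
    by_contra hbad; push_neg at hbad
    obtain ⟨mb, hmbS, hmbP, hmbJ⟩ := hbad
    set J : ℤ × ℤ → Prop := fun m => JoinedIn R (ctr m₀) (ctr m) with hJdef
    set GA : Set (ℤ × ℤ) := {m | m ∈ S ∧ P m ∧ J m} with hGA
    set GB : Set (ℤ × ℤ) := {m | m ∈ S ∧ P m ∧ ¬ J m} with hGB
    set A : Set (ℝ × ℝ) := ⋃ m ∈ GA, Aq S m with hA
    set B : Set (ℝ × ℝ) := ⋃ m ∈ GB, Aq S m with hB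
    have hGAfin : GA.Finite := S.finite_toSet.subset (fun m hm => hm.1)
    have hGBfin : GB.Finite := S.finite_toSet.subset (fun m hm => hm.1)
    have hABdisj : ∀ p, p ∈ A → p ∈ B → False := by
      intro p hpA hpB
      obtain ⟨m, hm, hpAq⟩ := Set.mem_iUnion₂.mp hpA
      obtain ⟨m', hm', hpAq'⟩ := Set.mem_iUnion₂.mp hpB
      have h1 : JoinedIn R (ctr m) p :=
        ((Aq_pathConnected hm.1).joinedIn (ctr m) (ctr_mem_Aq hm.1) p hpAq).mono
          (hAqR hm.1 hm.2.1)
      have h2 : JoinedIn R p (ctr m') :=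
        ((Aq_pathConnected hm'.1).joinedIn p hpAq' (ctr m') (ctr_mem_Aq hm'.1)).mono
          (hAqR hm'.1 hm'.2.1)
      exact hm'.2.2 ((hm.2.2.trans h1).trans h2)
    set Ahat : Set (ℝ × ℝ) := ⋃ m ∈ GA, unitSq m with hAhat
    set Bhat : Set (ℝ × ℝ) := ⋃ m ∈ GB, unitSq m with hBhat
    have hAhatC : IsClosed Ahat := hGAfin.isClosed_biUnion (fun m _ => isClosed_unitSq m)
    have hBhatC : IsClosed Bhat := hGBfin.isClosed_biUnion (fun m _ => isClosed_unitSq m)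
    have hAhatU : ∀ {p : ℝ × ℝ}, p ∈ Ahat → p ∈ U S → p ∈ A := by
      intro p hp hpU
      obtain ⟨m, hm, hpm⟩ := Set.mem_iUnion₂.mp hp
      exact Set.mem_iUnion₂.mpr ⟨m, hm, hpm, hpU⟩
    have hBhatU : ∀ {p : ℝ × ℝ}, p ∈ Bhat → p ∈ U S → p ∈ B := by
      intro p hp hpU
      obtain ⟨m, hm, hpm⟩ := Set.mem_iUnion₂.mp hp
      exact Set.mem_iUnion₂.mpr ⟨m, hm, hpm, hpU⟩
    have hAsub : A ⊆ Ahat := by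
      intro p hp; obtain ⟨m, hm, hpm⟩ := Set.mem_iUnion₂.mp hp
      exact Set.mem_iUnion₂.mpr ⟨m, hm, hpm.1⟩
    have hBsub : B ⊆ Bhat := by
      intro p hp; obtain ⟨m, hm, hpm⟩ := Set.mem_iUnion₂.mp hp
      exact Set.mem_iUnion₂.mpr ⟨m, hm, hpm.1⟩
    have hdich : ∀ m, m ∈ S → ¬ P m → (Dq S m ⊆ A ∨ Dq S m ⊆ B) := by
      intro m hmS hmP
      have hDsub : Dq S m ⊆ A ∪ B := by
        intro p hp
        obtain ⟨m', hm'S, hm'P, hpm'⟩ := Dq_subset_P P hPr hPu (p := p) hmP hp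
        have hpAq : p ∈ Aq S m' := ⟨hpm', hp.2⟩
        by_cases hJ : J m'
        · exact Or.inl (Set.mem_iUnion₂.mpr ⟨m', ⟨hm'S, hm'P, hJ⟩, hpAq⟩)
        · exact Or.inr (Set.mem_iUnion₂.mpr ⟨m', ⟨hm'S, hm'P, hJ⟩, hpAq⟩)
      have hpre : IsPreconnected (Dq S m) :=
        (Dq_pathConnected h hmS).isConnected.isPreconnected
      by_contra hc; push_neg at hc
      obtain ⟨p1, hp1D, hp1A⟩ := Set.not_subset.mp hc.1
      obtain ⟨p2, hp2D, hp2B⟩ := Set.not_subset.mp hc.2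
      have hcover : Dq S m ⊆ Bhatᶜ ∪ Ahatᶜ := by
        intro p hp
        rcases hDsub hp with hpA | hpB
        · exact Or.inl (fun hpBh => hABdisj p hpA (hBhatU hpBh hp.2))
        · exact Or.inr (fun hpAh => hABdisj p (hAhatU hpAh hp.2) hpB)
      have hne1 : (Dq S m ∩ Bhatᶜ).Nonempty :=
        ⟨p2, hp2D, fun hpBh => hp2B (hBhatU hpBh hp2D.2)⟩
      have hne2 : (Dq S m ∩ Ahatᶜ).Nonempty :=
        ⟨p1, hp1D, fun hpAh => hp1A (hAhatU hpAh hp1D.2)⟩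
      obtain ⟨p, hpD, hpB', hpA'⟩ :=
        hpre Bhatᶜ Ahatᶜ hBhatC.isOpen_compl hAhatC.isOpen_compl hcover hne1 hne2
      rcases hDsub hpD with hq | hq
      · exact hpA' (hAsub hq)
      · exact hpB' (hBsub hq)
    set CA : Set (ℤ × ℤ) := {m | m ∈ S ∧ ¬ P m ∧ Dq S m ⊆ A} with hCA
    set CB : Set (ℤ × ℤ) := {m | m ∈ S ∧ ¬ P m ∧ ¬ (Dq S m ⊆ A)} with hCB
    have hCAfin : CA.Finite := S.finite_toSet.subset (fun m hm => hm.1)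
    have hCBfin : CB.Finite := S.finite_toSet.subset (fun m hm => hm.1)
    set NA : Set (ℝ × ℝ) := ⋃ m ∈ CA, unitSq m with hNA
    set NB : Set (ℝ × ℝ) := ⋃ m ∈ CB, unitSq m with hNB
    have hNAC : IsClosed NA := hCAfin.isClosed_biUnion (fun m _ => isClosed_unitSq m)
    have hNBC : IsClosed NB := hCBfin.isClosed_biUnion (fun m _ => isClosed_unitSq m)
    set A' : Set (ℝ × ℝ) := U S ∩ (Bhat ∪ NB)ᶜ with hA'
    set B' : Set (ℝ × ℝ) := U S ∩ (Ahat ∪ NA)ᶜ with hB'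
    have hA'o : IsOpen A' := isOpen_interior.inter (hBhatC.union hNBC).isOpen_compl
    have hB'o : IsOpen B' := isOpen_interior.inter (hAhatC.union hNAC).isOpen_compl
    -- a point of U in some unit square of an opposite-colour square lies in its Dq
    have hDqmem : ∀ (p : ℝ × ℝ) (m1 m2 : ℤ × ℤ), m1 ≠ m2 → p ∈ U S →
        p ∈ unitSq m1 → p ∈ unitSq m2 → p ∈ Dq S m1 := by
      intro p m1 m2 hne hpU h1 h2
      exact ⟨⟨h1, fun hop => hne (openSq_unique hop h2).symm⟩, hpU⟩
    have hcoverU : U S ⊆ A' ∪ B' := by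
      intro p hpU
      by_contra hc
      rw [Set.mem_union] at hc; push_neg at hc
      have hp1 : p ∈ Bhat ∪ NB := by
        by_contra hn; exact hc.1 ⟨hpU, hn⟩
      have hp2 : p ∈ Ahat ∪ NA := by
        by_contra hn; exact hc.2 ⟨hpU, hn⟩
      rcases hp1 with hpB | hpNB <;> rcases hp2 with hpA | hpNA
      · exact hABdisj p (hAhatU hpA hpU) (hBhatU hpB hpU)
      · -- p ∈ Bhat and p ∈ NA
        have hpBm : p ∈ B := hBhatU hpB hpU
        obtain ⟨m, hm, hpm⟩ := Set.mem_iUnion₂.mp hpNA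
        obtain ⟨m', hm', hpm'⟩ := Set.mem_iUnion₂.mp hpBm
        have hne : m ≠ m' := fun he => hm.2.1 (he ▸ hm'.2.1)
        have hpD : p ∈ Dq S m := hDqmem p m m' hne hpU hpm hpm'.1
        exact hABdisj p (hm.2.2 hpD) hpBm
      · -- p ∈ NB and p ∈ Ahat
        have hpAm : p ∈ A := hAhatU hpA hpU
        obtain ⟨m, hm, hpm⟩ := Set.mem_iUnion₂.mp hpNB
        obtain ⟨m', hm', hpm'⟩ := Set.mem_iUnion₂.mp hpAm
        have hne : m ≠ m' := fun he => hm.2.1 (he ▸ hm'.2.1)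
        have hpD : p ∈ Dq S m := hDqmem p m m' hne hpU hpm hpm'.1
        have hDB : Dq S m ⊆ B := Or.resolve_left (hdich m hm.1 hm.2.1) hm.2.2
        exact hABdisj p hpAm (hDB hpD)
      · -- p ∈ NB and p ∈ NA
        obtain ⟨m1, hm1, hpm1⟩ := Set.mem_iUnion₂.mp hpNB
        obtain ⟨m2, hm2, hpm2⟩ := Set.mem_iUnion₂.mp hpNA
        have hne : m1 ≠ m2 := fun he => hm1.2.2 (he ▸ hm2.2.2)
        have hpD1 : p ∈ Dq S m1 := hDqmem p m1 m2 hne hpU hpm1 hpm2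
        have hpD2 : p ∈ Dq S m2 := hDqmem p m2 m1 hne.symm hpU hpm2 hpm1
        have hDB : Dq S m1 ⊆ B := Or.resolve_left (hdich m1 hm1.1 hm1.2.1) hm1.2.2
        exact hABdisj p (hm2.2.2 hpD2) (hDB hpD1)
    have hmem0 : ctr m₀ ∈ U S ∩ A' := by
      refine ⟨hx₀U, hx₀U, ?_⟩
      rintro (hBh | hNBh)
      · obtain ⟨m, hm, hpm⟩ := Set.mem_iUnion₂.mp hBh
        have he : m = m₀ := openSq_unique (ctr_mem_openSq m₀) hpm
        exact hm.2.2 (he ▸ (JoinedIn.refl hx₀R : JoinedIn R (ctr m₀) (ctr m₀)))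
      · obtain ⟨m, hm, hpm⟩ := Set.mem_iUnion₂.mp hNBh
        have he : m = m₀ := openSq_unique (ctr_mem_openSq m₀) hpm
        exact hm.2.1 (he ▸ hm₀P)
    have hctrmbU : ctr mb ∈ U S := openSq_subset_U hmbS (ctr_mem_openSq mb)
    have hmem1 : ctr mb ∈ U S ∩ B' := by
      refine ⟨hctrmbU, hctrmbU, ?_⟩
      rintro (hAh | hNAh)
      · obtain ⟨m, hm, hpm⟩ := Set.mem_iUnion₂.mp hAh
        have he : m = mb := openSq_unique (ctr_mem_openSq mb) hpm
        exact hmbJ (he ▸ hm.2.2)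
      · obtain ⟨m, hm, hpm⟩ := Set.mem_iUnion₂.mp hNAh
        have he : m = mb := openSq_unique (ctr_mem_openSq mb) hpm
        exact hm.2.1 (he ▸ hmbP)
    obtain ⟨p, hpU', hpA', hpB'⟩ :=
      h.connected.isPreconnected A' B' hA'o hB'o hcoverU ⟨ctr m₀, hmem0⟩ ⟨ctr mb, hmem1⟩
    obtain ⟨m, hmS, hpm⟩ := exists_sq (interior_subset hpU')
    by_cases hPm : P m
    · by_cases hJm : J m
      · exact hpB'.2 (Or.inl (Set.mem_iUnion₂.mpr ⟨m, ⟨hmS, hPm, hJm⟩, hpm⟩))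
      · exact hpA'.2 (Or.inl (Set.mem_iUnion₂.mpr ⟨m, ⟨hmS, hPm, hJm⟩, hpm⟩))
    · by_cases hDm : Dq S m ⊆ A
      · exact hpB'.2 (Or.inr (Set.mem_iUnion₂.mpr ⟨m, ⟨hmS, hPm, hDm⟩, hpm⟩))
      · exact hpA'.2 (Or.inr (Set.mem_iUnion₂.mpr ⟨m, ⟨hmS, hPm, hDm⟩, hpm⟩))
  have aux : ∀ z ∈ R, JoinedIn R (ctr m₀) z := by
    intro z hz
    obtain ⟨m, hmS, hmP, hzA⟩ := hRAq hz
    exact (key m hmS hmP).trans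
      (((Aq_pathConnected hmS).joinedIn (ctr m) (ctr_mem_Aq hmS) z hzA).mono (hAqR hmS hmP))
  exact ⟨ctr m₀, hx₀R, fun {y} hy => aux y hy⟩

end RBAux

/-- Under the standing assumptions, the set
`R° = (union of the closed red squares of S) \ ∂Ω̄` is path-connected, and likewise
`K° = (union of the closed black squares of S) \ ∂Ω̄` is path-connected, where `∂Ω̄` is the
topological frontier of `Ω̄` in `ℝ²`. -/
theorem red_black_path_connected (S : Finset (ℤ × ℤ)) (h : Standing S) :
    IsPathConnected
        ((⋃ q ∈ S.filter fun q => isRed q, unitSq q) \ frontier (meshRegion S)) ∧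
      IsPathConnected
        ((⋃ q ∈ S.filter fun q => ¬ isRed q, unitSq q) \ frontier (meshRegion S)) := by
  constructor
  · exact RBAux.master h (fun q => isRed q) (by intro a b; simp only [isRed]; omega)
      (by intro a b; simp only [isRed]; omega)
  · exact RBAux.master h (fun q => ¬ isRed q) (by intro a b; simp only [isRed]; omega)
      (by intro a b; simp only [isRed]; omega)
end

section
/- Under the standing assumptions, for any two red squares Q and Q' of S there exists a finite sequence of red squares Q = Q₁, Q₂, …, Q_N = Q' of S such that for each i = 1, …, N−1 the squares Qᵢ and Qᵢ₊₁ are distinct and share a common corner which is an interior vertex; the same holds for any two black squares of S. -/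
/-!
If `v` and `w` are interior corners of one square and lie on a common grid line, one of the two
grid squares having both as corners has any prescribed color, so every square of that color around
`v` is at most two steps away from every one around `w`. If `v` and `w` are diagonally opposite,
the no-diagonal assumption makes a third corner interior, which reduces to the aligned case.

Every square has an interior corner, and squares of `S` sharing an edge share an interior corner.
Two squares `a`, `b` meeting at a point `z` of `Ω` are joined through the square `(a.1, b.2)`,
which contains `z` and hence lies in `S`. So the squares reachable from a fixed one by steps
sharing an interior corner cover a relatively clopen part of `Ω`, which by connectedness is all of
`Ω`. Following such a sequence of squares, the squares of a given color around successive interior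
corners are chained together.
-/

open Relation

theorem Relation.ReflTransGen.exists_chain {α : Type*} {r : α → α → Prop} {p : α → Prop}
    {a b : α} (hab : ReflTransGen r a b) (ha : p a) (hp : ∀ x y, p x → r x y → p y) :
    ∃ (N : ℕ) (f : ℕ → α), f 0 = a ∧ f N = b ∧ (∀ i ≤ N, p (f i)) ∧
      ∀ i < N, r (f i) (f (i + 1)) := by
  induction hab using ReflTransGen.head_induction_on with
  | refl => exact ⟨0, fun _ => b, rfl, rfl, fun _ _ => ha, fun _ hi => (Nat.not_lt_zero _ hi).elim⟩
  | @head a c hac _ ih =>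
    obtain ⟨N, f, hf0, hfN, hfp, hfr⟩ := ih (hp _ _ ha hac)
    refine ⟨N + 1, fun | 0 => a | i + 1 => f i, rfl, hfN, fun i hi => ?_, fun i hi => ?_⟩
    · cases i
      exacts [ha, hfp _ (by omega)]
    · cases i
      exacts [show r a (f 0) from hf0 ▸ hac, hfr _ (by omega)]

theorem Int.le_add_one_of_mem_Icc {m n : ℤ} {x : ℝ} (hm : x ∈ Set.Icc (m : ℝ) (m + 1))
    (hn : x ∈ Set.Icc (n : ℝ) (n + 1)) : m ≤ n + 1 := by
  exact_mod_cast hm.1.trans hn.2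

theorem Int.eq_of_mem_Ioo_of_mem_Icc {m n : ℤ} {x : ℝ} (hm : x ∈ Set.Ioo (m : ℝ) (m + 1))
    (hn : x ∈ Set.Icc (n : ℝ) (n + 1)) : n = m := by
  have h₁ : n < m + 1 := by exact_mod_cast hn.1.trans_lt hm.2
  have h₂ : m < n + 1 := by exact_mod_cast hm.1.trans_le hn.2
  omega

section Corners

variable {S : Finset (ℤ × ℤ)} {v q : ℤ × ℤ}

theorem mem_cornersF_iff :
    v ∈ cornersF q ↔ (v.1 = q.1 ∨ v.1 = q.1 + 1) ∧ (v.2 = q.2 ∨ v.2 = q.2 + 1) := by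
  simp only [cornersF, Finset.mem_insert, Finset.mem_singleton, Prod.ext_iff]
  omega

theorem mem_cornersF_iff_eq :
    v ∈ cornersF q ↔ q = (v.1 - 1, v.2 - 1) ∨ q = (v.1 - 1, v.2) ∨ q = (v.1, v.2 - 1) ∨ q = v := by
  simp only [mem_cornersF_iff, Prod.ext_iff]
  omega

theorem self_mem_cornersF (q : ℤ × ℤ) : q ∈ cornersF q := by
  simp [cornersF]

theorem interiorVertex.mem_of_mem_cornersF (hv : interiorVertex S v) (hq : v ∈ cornersF q) :
    q ∈ S := by
  obtain rfl | rfl | rfl | rfl := mem_cornersF_iff_eq.mp hq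
  exacts [hv.1, hv.2.1, hv.2.2.1, hv.2.2.2]

theorem meshVertex_of_mem_cornersF (hq : q ∈ S) (hv : v ∈ cornersF q) : meshVertex S v := by
  obtain rfl | rfl | rfl | rfl := mem_cornersF_iff_eq.mp hv
  exacts [.inl hq, .inr (.inl hq), .inr (.inr (.inl hq)), .inr (.inr (.inr hq))]

theorem exists_mem_cornersF_isRed_iff (v X : ℤ × ℤ) :
    ∃ Z, v ∈ cornersF Z ∧ (isRed Z ↔ isRed X) := by
  by_cases hv : isRed v ↔ isRed X
  · exact ⟨v, self_mem_cornersF v, hv⟩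
  · refine ⟨(v.1 - 1, v.2), mem_cornersF_iff.mpr (by dsimp only; omega), ?_⟩
    simp only [isRed] at hv ⊢
    omega

end Corners

def SameColorStep (S : Finset (ℤ × ℤ)) (a b : ℤ × ℤ) : Prop :=
  a ≠ b ∧ (isRed a ↔ isRed b) ∧ ∃ v, v ∈ cornersF a ∧ v ∈ cornersF b ∧ interiorVertex S v

abbrev SameColorReach (S : Finset (ℤ × ℤ)) : ℤ × ℤ → ℤ × ℤ → Prop :=
  ReflTransGen (SameColorStep S)

section Reach

variable {S : Finset (ℤ × ℤ)} {v w P X Y : ℤ × ℤ}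

theorem sameColorReach_of_mem_cornersF (hv : interiorVertex S v) (hX : v ∈ cornersF X)
    (hY : v ∈ cornersF Y) (hXY : isRed X ↔ isRed Y) : SameColorReach S X Y := by
  obtain rfl | hne := eq_or_ne X Y
  · exact .refl
  · exact .single ⟨hne, hXY, v, hX, hY, hv⟩

theorem exists_mem_cornersF_of_aligned (hvP : v ∈ cornersF P) (hwP : w ∈ cornersF P)
    (hvw : v.1 = w.1 ∨ v.2 = w.2) (X : ℤ × ℤ) :
    ∃ Z, v ∈ cornersF Z ∧ w ∈ cornersF Z ∧ (isRed Z ↔ isRed X) := by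
  by_cases hP : isRed P ↔ isRed X
  · exact ⟨P, hvP, hwP, hP⟩
  rw [mem_cornersF_iff] at hvP hwP
  simp only [isRed] at hP
  -- otherwise reflect `P` across the grid line through `v` and `w`
  rcases hvw with hvw | hvw
  · refine ⟨(2 * v.1 - P.1 - 1, P.2), ?_, ?_, ?_⟩ <;>
      simp only [mem_cornersF_iff, isRed] <;> omega
  · refine ⟨(P.1, 2 * v.2 - P.2 - 1), ?_, ?_, ?_⟩ <;>
      simp only [mem_cornersF_iff, isRed] <;> omega

theorem sameColorReach_of_aligned (hv : interiorVertex S v) (hw : interiorVertex S w)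
    (hvP : v ∈ cornersF P) (hwP : w ∈ cornersF P) (hvw : v.1 = w.1 ∨ v.2 = w.2)
    (hX : v ∈ cornersF X) (hY : w ∈ cornersF Y) (hXY : isRed X ↔ isRed Y) :
    SameColorReach S X Y := by
  obtain ⟨Z, hvZ, hwZ, hZX⟩ := exists_mem_cornersF_of_aligned hvP hwP hvw X
  exact (sameColorReach_of_mem_cornersF hv hX hvZ hZX.symm).trans
    (sameColorReach_of_mem_cornersF hw hwZ hY (hZX.trans hXY))

theorem Standing.interiorVertex_of_diagonal (h : Standing S) (hv : interiorVertex S v)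
    (hw : interiorVertex S w) (hvP : v ∈ cornersF P) (hwP : w ∈ cornersF P)
    (h₁ : v.1 ≠ w.1) (h₂ : v.2 ≠ w.2) :
    interiorVertex S (v.1, w.2) ∨ interiorVertex S (w.1, v.2) := by
  have hP := hv.mem_of_mem_cornersF hvP
  have boundary : ∀ u ∈ cornersF P, ¬ interiorVertex S u → boundaryVertex S u :=
    fun u hu hu' => ⟨meshVertex_of_mem_cornersF hP hu, hu'⟩
  by_contra! ⟨hvw, hwv⟩
  obtain ⟨p₁, p₂⟩ := P
  obtain ⟨v₁, v₂⟩ := v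
  obtain ⟨w₁, w₂⟩ := w
  simp only [mem_cornersF_iff] at hvP hwP
  obtain ⟨rfl | rfl, rfl | rfl⟩ := hvP <;> obtain ⟨rfl | rfl, rfl | rfl⟩ := hwP
  -- in the four diagonal positions `P` has exactly two boundary corners, diagonally opposite
  all_goals first
    | exact absurd rfl h₁
    | exact absurd rfl h₂
    | exact h.noDiagOne _ hP ⟨boundary _ (by simp [cornersF]) ‹_›,
        boundary _ (by simp [cornersF]) ‹_›, ‹_›, ‹_›⟩
    | exact h.noDiagTwo _ hP ⟨boundary _ (by simp [cornersF]) ‹_›,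
        boundary _ (by simp [cornersF]) ‹_›, ‹_›, ‹_›⟩

theorem Standing.exists_interiorVertex_aligned (h : Standing S) (hv : interiorVertex S v)
    (hw : interiorVertex S w) (hvP : v ∈ cornersF P) (hwP : w ∈ cornersF P) :
    ∃ u ∈ cornersF P, interiorVertex S u ∧ (v.1 = u.1 ∨ v.2 = u.2) ∧ (u.1 = w.1 ∨ u.2 = w.2) := by
  by_cases hvw : v.1 = w.1 ∨ v.2 = w.2
  · exact ⟨v, hvP, hv, .inl rfl, hvw⟩
  rw [not_or] at hvw
  rw [mem_cornersF_iff] at hvP hwP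
  rcases h.interiorVertex_of_diagonal hv hw (mem_cornersF_iff.mpr hvP) (mem_cornersF_iff.mpr hwP)
    hvw.1 hvw.2 with hu | hu
  · exact ⟨(v.1, w.2), mem_cornersF_iff.mpr ⟨hvP.1, hwP.2⟩, hu, .inl rfl, .inr rfl⟩
  · exact ⟨(w.1, v.2), mem_cornersF_iff.mpr ⟨hwP.1, hvP.2⟩, hu, .inr rfl, .inl rfl⟩

theorem Standing.sameColorReach_of_corners_of_square (h : Standing S) (hv : interiorVertex S v)
    (hw : interiorVertex S w) (hvP : v ∈ cornersF P) (hwP : w ∈ cornersF P)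
    (hX : v ∈ cornersF X) (hY : w ∈ cornersF Y) (hXY : isRed X ↔ isRed Y) :
    SameColorReach S X Y := by
  obtain ⟨u, huP, hu, hvu, huw⟩ := h.exists_interiorVertex_aligned hv hw hvP hwP
  obtain ⟨Z, huZ, hZX⟩ := exists_mem_cornersF_isRed_iff u X
  exact (sameColorReach_of_aligned hv hu hvP huP hvu hX huZ hZX.symm).trans
    (sameColorReach_of_aligned hu hw huP hwP huw huZ hY (hZX.trans hXY))

theorem Standing.exists_interiorVertex_mem_cornersF (h : Standing S) (hP : P ∈ S) :
    ∃ v ∈ cornersF P, interiorVertex S v := by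
  by_contra! hP'
  have boundary : ∀ u ∈ cornersF P, boundaryVertex S u :=
    fun u hu => ⟨meshVertex_of_mem_cornersF hP hu, hP' u hu⟩
  exact h.noFourBoundary P hP ⟨boundary _ (self_mem_cornersF P), boundary _ (by simp [cornersF]),
    boundary _ (by simp [cornersF]), boundary _ (by simp [cornersF])⟩

end Reach

def SharesInteriorCorner (S : Finset (ℤ × ℤ)) (a b : ℤ × ℤ) : Prop :=
  ∃ v, interiorVertex S v ∧ v ∈ cornersF a ∧ v ∈ cornersF b

section Connectivity

variable {S : Finset (ℤ × ℤ)} {a b c P P' : ℤ × ℤ} {z : ℝ × ℝ}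

theorem SharesInteriorCorner.symm (hab : SharesInteriorCorner S a b) : SharesInteriorCorner S b a :=
  let ⟨v, hv, ha, hb⟩ := hab
  ⟨v, hv, hb, ha⟩

theorem Standing.sharesInteriorCorner_of_vertical (h : Standing S) (ha : a ∈ S) (hb : b ∈ S)
    (h₁ : a.1 = b.1) (h₂ : b.2 = a.2 + 1) : SharesInteriorCorner S a b := by
  have hb' : (b.1, b.2 - 1) ∈ S := by
    rwa [show (b.1, b.2 - 1) = a from Prod.ext (by omega) (by omega)]
  rcases h.edgeH b hb hb' with hv | hv
  · exact ⟨b, hv, mem_cornersF_iff.mpr (by omega), self_mem_cornersF b⟩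
  · exact ⟨(b.1 + 1, b.2), hv, mem_cornersF_iff.mpr (by dsimp only; omega),
      mem_cornersF_iff.mpr (by dsimp only; omega)⟩

theorem Standing.sharesInteriorCorner_of_horizontal (h : Standing S) (ha : a ∈ S) (hb : b ∈ S)
    (h₁ : b.1 = a.1 + 1) (h₂ : a.2 = b.2) : SharesInteriorCorner S a b := by
  have hb' : (b.1 - 1, b.2) ∈ S := by
    rwa [show (b.1 - 1, b.2) = a from Prod.ext (by omega) (by omega)]
  rcases h.edgeV b hb hb' with hv | hv
  · exact ⟨b, hv, mem_cornersF_iff.mpr (by omega), self_mem_cornersF b⟩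
  · exact ⟨(b.1, b.2 + 1), hv, mem_cornersF_iff.mpr (by dsimp only; omega),
      mem_cornersF_iff.mpr (by dsimp only; omega)⟩

theorem Standing.reflTransGen_of_fst_eq (h : Standing S) (ha : a ∈ S) (hb : b ∈ S)
    (h₁ : a.1 = b.1) (hab : a.2 ≤ b.2 + 1) (hba : b.2 ≤ a.2 + 1) :
    ReflTransGen (SharesInteriorCorner S) a b := by
  rcases (by omega : b.2 = a.2 ∨ b.2 = a.2 + 1 ∨ a.2 = b.2 + 1) with h₂ | h₂ | h₂
  · rw [show b = a from Prod.ext h₁.symm h₂]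
  · exact .single (h.sharesInteriorCorner_of_vertical ha hb h₁ h₂)
  · exact .single (h.sharesInteriorCorner_of_vertical hb ha h₁.symm h₂).symm

theorem Standing.reflTransGen_of_snd_eq (h : Standing S) (ha : a ∈ S) (hb : b ∈ S)
    (h₂ : a.2 = b.2) (hab : a.1 ≤ b.1 + 1) (hba : b.1 ≤ a.1 + 1) :
    ReflTransGen (SharesInteriorCorner S) a b := by
  rcases (by omega : b.1 = a.1 ∨ b.1 = a.1 + 1 ∨ a.1 = b.1 + 1) with h₁ | h₁ | h₁
  · rw [show b = a from Prod.ext h₁ h₂.symm]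
  · exact .single (h.sharesInteriorCorner_of_horizontal ha hb h₁ h₂)
  · exact .single (h.sharesInteriorCorner_of_horizontal hb ha h₁ h₂.symm).symm

theorem mem_meshRegion : z ∈ meshRegion S ↔ ∃ q ∈ S, z ∈ unitSq q := by
  simp [meshRegion]

theorem unitSq_subset_meshRegion (hP : P ∈ S) : unitSq P ⊆ meshRegion S :=
  Set.subset_biUnion_of_mem (u := unitSq) hP

theorem isClosed_meshRegion (S : Finset (ℤ × ℤ)) : IsClosed (meshRegion S) :=
  S.finite_toSet.isClosed_biUnion fun _ _ => isClosed_Icc.prod isClosed_Icc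

theorem exists_mem_interior_meshRegion_mem_unitSq (hP : P ∈ S) :
    ∃ z ∈ interior (meshRegion S), z ∈ unitSq P := by
  refine ⟨((P.1 : ℝ) + 1 / 2, (P.2 : ℝ) + 1 / 2), interior_mono (unitSq_subset_meshRegion hP) ?_,
    ⟨by constructor <;> linarith, by constructor <;> linarith⟩⟩
  rw [unitSq, interior_prod_eq, interior_Icc, interior_Icc]
  exact ⟨by constructor <;> linarith, by constructor <;> linarith⟩

theorem mem_of_mem_interior_meshRegion (hz : z ∈ interior (meshRegion S)) (hc : z ∈ unitSq c) :
    c ∈ S := by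
  have hclosure :
      unitSq c = closure (Set.Ioo (c.1 : ℝ) (c.1 + 1) ×ˢ Set.Ioo (c.2 : ℝ) (c.2 + 1)) := by
    rw [closure_prod_eq, closure_Ioo (by simp), closure_Ioo (by simp), unitSq]
  rw [hclosure] at hc
  obtain ⟨p, hpS, hpc⟩ := mem_closure_iff.mp hc _ isOpen_interior hz
  obtain ⟨q, hq, hpq⟩ := mem_meshRegion.mp (interior_subset hpS)
  rwa [← Prod.ext (Int.eq_of_mem_Ioo_of_mem_Icc hpc.1 hpq.1)
    (Int.eq_of_mem_Ioo_of_mem_Icc hpc.2 hpq.2)]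

theorem Standing.reflTransGen_of_mem_unitSq (h : Standing S) (hz : z ∈ interior (meshRegion S))
    (ha : z ∈ unitSq a) (hb : z ∈ unitSq b) : ReflTransGen (SharesInteriorCorner S) a b := by
  have hc : z ∈ unitSq (a.1, b.2) := ⟨ha.1, hb.2⟩
  have haS := mem_of_mem_interior_meshRegion hz ha
  have hbS := mem_of_mem_interior_meshRegion hz hb
  have hcS := mem_of_mem_interior_meshRegion hz hc
  exact (h.reflTransGen_of_fst_eq haS hcS rfl (Int.le_add_one_of_mem_Icc ha.2 hb.2)
    (Int.le_add_one_of_mem_Icc hb.2 ha.2)).trans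
    (h.reflTransGen_of_snd_eq hcS hbS rfl (Int.le_add_one_of_mem_Icc ha.1 hb.1)
      (Int.le_add_one_of_mem_Icc hb.1 ha.1))

theorem Standing.reflTransGen_sharesInteriorCorner (h : Standing S) (hP : P ∈ S) (hP' : P' ∈ S) :
    ReflTransGen (SharesInteriorCorner S) P P' := by
  classical
  by_contra hPP'
  set T := S.filter (ReflTransGen (SharesInteriorCorner S) P)
  have hcover : meshRegion S = meshRegion T ∪ meshRegion (S \ T) := by
    rw [meshRegion, meshRegion, meshRegion, ← Finset.set_biUnion_union,
      Finset.union_sdiff_of_subset (Finset.filter_subset _ _)]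
  have hPT : P ∈ T := Finset.mem_filter.mpr ⟨hP, .refl⟩
  have hP'T : P' ∈ S \ T := Finset.mem_sdiff.mpr ⟨hP', fun h' => hPP' (Finset.mem_filter.mp h').2⟩
  obtain ⟨z₁, hz₁, hz₁P⟩ := exists_mem_interior_meshRegion_mem_unitSq hP
  obtain ⟨z₂, hz₂, hz₂P'⟩ := exists_mem_interior_meshRegion_mem_unitSq hP'
  obtain ⟨z, hz, hzT, hzT'⟩ := isPreconnected_closed_iff.mp h.connected.isPreconnected _ _
    (isClosed_meshRegion T) (isClosed_meshRegion (S \ T)) (hcover ▸ interior_subset)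
    ⟨z₁, hz₁, unitSq_subset_meshRegion hPT hz₁P⟩ ⟨z₂, hz₂, unitSq_subset_meshRegion hP'T hz₂P'⟩
  obtain ⟨a, ha, hza⟩ := mem_meshRegion.mp hzT
  obtain ⟨b, hb, hzb⟩ := mem_meshRegion.mp hzT'
  obtain ⟨hbS, hbT⟩ := Finset.mem_sdiff.mp hb
  exact hbT (Finset.mem_filter.mpr
    ⟨hbS, (Finset.mem_filter.mp ha).2.trans (h.reflTransGen_of_mem_unitSq hz hza hzb)⟩)

end Connectivity

theorem Standing.sameColorReach {S : Finset (ℤ × ℤ)} (h : Standing S) {Q Q' : ℤ × ℤ}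
    (hQ : Q ∈ S) (hQ' : Q' ∈ S) (hQQ' : isRed Q ↔ isRed Q') : SameColorReach S Q Q' := by
  have key : ∀ q, ReflTransGen (SharesInteriorCorner S) Q q → ∀ u ∈ cornersF q,
      interiorVertex S u → ∀ X, u ∈ cornersF X → (isRed Q ↔ isRed X) → SameColorReach S Q X := by
    intro q hq
    induction hq with
    | refl => exact fun u huQ hu X hX hQX => sameColorReach_of_mem_cornersF hu huQ hX hQX
    | tail _ hbc ih =>
      obtain ⟨u₀, hu₀, hu₀b, hu₀c⟩ := hbc
      intro u huc hu X hX hQX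
      obtain ⟨Z, hZ, hZQ⟩ := exists_mem_cornersF_isRed_iff u₀ Q
      exact (ih u₀ hu₀b hu₀ Z hZ hZQ.symm).trans
        (h.sameColorReach_of_corners_of_square hu₀ hu hu₀c huc hZ hX (hZQ.trans hQX))
  obtain ⟨u, huQ', hu⟩ := h.exists_interiorVertex_mem_cornersF hQ'
  exact key Q' (h.reflTransGen_sharesInteriorCorner hQ hQ') u huQ' hu Q' huQ' hQQ'

/-- Under the standing assumptions, for any two squares `Q, Q'` of `S` of the
same color there exists a finite sequence of squares `Q = Q₁, Q₂, …, Q_N = Q'` of `S` of that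
color such that consecutive squares are distinct and share a common corner which is an
interior vertex. -/
theorem same_color_chain (S : Finset (ℤ × ℤ)) (h : Standing S) :
    ∀ Q ∈ S, ∀ Q' ∈ S, (isRed Q ↔ isRed Q') →
      ∃ (N : ℕ) (f : ℕ → ℤ × ℤ), f 0 = Q ∧ f N = Q' ∧
        (∀ i ≤ N, f i ∈ S ∧ (isRed (f i) ↔ isRed Q)) ∧
        ∀ i < N, f i ≠ f (i + 1) ∧
          ∃ v : ℤ × ℤ, v ∈ cornersF (f i) ∧ v ∈ cornersF (f (i + 1)) ∧
            interiorVertex S v := by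
  intro Q hQ Q' hQ' hQQ'
  obtain ⟨N, f, hf0, hfN, hfS, hstep⟩ := (h.sameColorReach hQ hQ' hQQ').exists_chain
    (p := fun X => X ∈ S ∧ (isRed X ↔ isRed Q)) ⟨hQ, Iff.rfl⟩
    fun _ _ hX ⟨_, hXY, _, _, hvY, hv⟩ => ⟨hv.mem_of_mem_cornersF hvY, hXY.symm.trans hX.2⟩
  exact ⟨N, f, hf0, hfN, hfS, fun i hi => ⟨(hstep i hi).1, (hstep i hi).2.2⟩⟩
end

section
/- For every c : ℤ×ℤ → ℝ×ℝ supported on the interior vertices, the discrete divergence Dc has zero total sum over the red squares of S and zero total sum over the black squares of S: Σ_{Q∈S, Q red} (Dc)(Q) = 0 and Σ_{Q∈S, Q black} (Dc)(Q) = 0. -/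
private lemma diag_cancel (S R : Finset (ℤ × ℤ))
    (hR : ∀ q r : ℤ × ℤ, q ∈ R → r ∈ S → (q.1 + q.2) % 2 = (r.1 + r.2) % 2 → r ∈ R)
    (F : ℤ × ℤ → ℝ) (hF : ∀ v, ¬ interiorVertex S v → F v = 0) :
    ∑ q ∈ R, F (q.1 + 1, q.2 + 1) = ∑ q ∈ R, F q := by
  classical
  have e1 : ∑ q ∈ Finset.filter (fun q : ℤ × ℤ => interiorVertex S (q.1 + 1, q.2 + 1)) R,
      F (q.1 + 1, q.2 + 1) = ∑ q ∈ R, F (q.1 + 1, q.2 + 1) :=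
    Finset.sum_filter_of_ne (fun q _ h => by by_contra hn; exact h (hF _ hn))
  have e2 : ∑ q ∈ Finset.filter (fun q : ℤ × ℤ => interiorVertex S q) R, F q
      = ∑ q ∈ R, F q :=
    Finset.sum_filter_of_ne (fun q _ h => by by_contra hn; exact h (hF _ hn))
  rw [← e1, ← e2]
  refine Finset.sum_nbij' (fun q => (q.1 + 1, q.2 + 1)) (fun q => (q.1 - 1, q.2 - 1))
    ?_ ?_ ?_ ?_ ?_
  · intro q hq
    rw [Finset.mem_filter] at hq ⊢
    obtain ⟨hqR, hiv⟩ := hq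
    exact ⟨hR q (q.1 + 1, q.2 + 1) hqR hiv.2.2.2 (by omega), hiv⟩
  · intro r hr
    rw [Finset.mem_filter] at hr ⊢
    obtain ⟨hrR, hiv⟩ := hr
    refine ⟨hR r (r.1 - 1, r.2 - 1) hrR hiv.1 (by omega), ?_⟩
    have e : ((r.1 - 1 + 1 : ℤ), (r.2 - 1 + 1 : ℤ)) = r := by
      obtain ⟨a, b⟩ := r; simp only [Prod.mk.injEq]; omega
    simpa [e] using hiv
  · intro q _; obtain ⟨a, b⟩ := q; simp only [Prod.mk.injEq]; omega
  · intro q _; obtain ⟨a, b⟩ := q; simp only [Prod.mk.injEq]; omega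
  · intro q _; rfl

private lemma anti_cancel (S R : Finset (ℤ × ℤ))
    (hR : ∀ q r : ℤ × ℤ, q ∈ R → r ∈ S → (q.1 + q.2) % 2 = (r.1 + r.2) % 2 → r ∈ R)
    (G : ℤ × ℤ → ℝ) (hG : ∀ v, ¬ interiorVertex S v → G v = 0) :
    ∑ q ∈ R, G (q.1 + 1, q.2) = ∑ q ∈ R, G (q.1, q.2 + 1) := by
  classical
  have e1 : ∑ q ∈ Finset.filter (fun q : ℤ × ℤ => interiorVertex S (q.1 + 1, q.2)) R,
      G (q.1 + 1, q.2) = ∑ q ∈ R, G (q.1 + 1, q.2) :=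
    Finset.sum_filter_of_ne (fun q _ h => by by_contra hn; exact h (hG _ hn))
  have e2 : ∑ q ∈ Finset.filter (fun q : ℤ × ℤ => interiorVertex S (q.1, q.2 + 1)) R,
      G (q.1, q.2 + 1) = ∑ q ∈ R, G (q.1, q.2 + 1) :=
    Finset.sum_filter_of_ne (fun q _ h => by by_contra hn; exact h (hG _ hn))
  rw [← e1, ← e2]
  refine Finset.sum_nbij' (fun q => (q.1 + 1, q.2 - 1)) (fun q => (q.1 - 1, q.2 + 1))
    ?_ ?_ ?_ ?_ ?_
  · intro q hq
    rw [Finset.mem_filter] at hq ⊢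
    obtain ⟨hqR, hiv⟩ := hq
    refine ⟨hR q (q.1 + 1, q.2 - 1) hqR hiv.2.2.1 (by omega), ?_⟩
    have e : (q.2 - 1 + 1 : ℤ) = q.2 := by omega
    simpa [e] using hiv
  · intro r hr
    rw [Finset.mem_filter] at hr ⊢
    obtain ⟨hrR, hiv⟩ := hr
    refine ⟨hR r (r.1 - 1, r.2 + 1) hrR hiv.2.1 (by omega), ?_⟩
    have e : (r.1 - 1 + 1 : ℤ) = r.1 := by omega
    simpa [e] using hiv
  · intro q _; obtain ⟨a, b⟩ := q; simp only [Prod.mk.injEq]; omega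
  · intro q _; obtain ⟨a, b⟩ := q; simp only [Prod.mk.injEq]; omega
  · intro q _
    have e : (q.2 - 1 + 1 : ℤ) = q.2 := by omega
    simp [e]

/-- For every `c : ℤ × ℤ → ℝ × ℝ` supported on the interior vertices, the
discrete divergence `Dc` has zero total sum over the red squares of `S` and zero total sum
over the black squares of `S`. -/
theorem div_sum_red_black_zero (S : Finset (ℤ × ℤ)) (c : ℤ × ℤ → ℝ × ℝ)
    (hc : ∀ v : ℤ × ℤ, ¬ interiorVertex S v → c v = 0) :
    (∑ q ∈ S.filter fun q => isRed q, Ddiv c q) = 0 ∧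
      (∑ q ∈ S.filter fun q => ¬ isRed q, Ddiv c q) = 0 := by
  classical
  set F : ℤ × ℤ → ℝ := fun v => (c v).1 + (c v).2 with hFdef
  set G : ℤ × ℤ → ℝ := fun v => (c v).1 - (c v).2 with hGdef
  have hF : ∀ v, ¬ interiorVertex S v → F v = 0 := fun v hv => by
    simp [hFdef, hc v hv]
  have hG : ∀ v, ¬ interiorVertex S v → G v = 0 := fun v hv => by
    simp [hGdef, hc v hv]
  have hdec : ∀ q : ℤ × ℤ, Ddiv c q
      = (F (q.1 + 1, q.2 + 1) - F q) + (G (q.1 + 1, q.2) - G (q.1, q.2 + 1)) := by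
    intro q
    simp only [Ddiv, dX, dY, hFdef, hGdef]
    ring
  have key : ∀ R : Finset (ℤ × ℤ),
      (∀ q r : ℤ × ℤ, q ∈ R → r ∈ S → (q.1 + q.2) % 2 = (r.1 + r.2) % 2 → r ∈ R) →
      ∑ q ∈ R, Ddiv c q = 0 := by
    intro R hR
    have h1 := diag_cancel S R hR F hF
    have h2 := anti_cancel S R hR G hG
    calc ∑ q ∈ R, Ddiv c q
        = ∑ q ∈ R, ((F (q.1 + 1, q.2 + 1) - F q) + (G (q.1 + 1, q.2) - G (q.1, q.2 + 1))) :=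
          Finset.sum_congr rfl (fun q _ => hdec q)
      _ = (∑ q ∈ R, F (q.1 + 1, q.2 + 1) - ∑ q ∈ R, F q)
          + (∑ q ∈ R, G (q.1 + 1, q.2) - ∑ q ∈ R, G (q.1, q.2 + 1)) := by
          rw [Finset.sum_add_distrib, Finset.sum_sub_distrib, Finset.sum_sub_distrib]
      _ = 0 := by rw [h1, h2]; ring
  constructor
  · refine key _ ?_
    intro q r hq hr hpar
    rw [Finset.mem_filter] at hq ⊢
    exact ⟨hr, by have := hq.2; simp only [isRed] at this ⊢; omega⟩
  · refine key _ ?_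
    intro q r hq hr hpar
    rw [Finset.mem_filter] at hq ⊢
    exact ⟨hr, by have := hq.2; simp only [isRed] at this ⊢; omega⟩
end
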